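/- arXiv:2210.16826 — 8 statements merged into one kernel-verified Lean document; each statement's English description precedes it below -/
import Mathlib

section
/- For any positive integer n and integer c with c^2 - 4 ≠ 0, the central trinomial coefficients satisfy (n+1)*T(n+1,0) = (2n+1)*c*T(n,0) - n*(c^2-4)*T(n-1,0). -/
/-- The trinomial coefficient: coefficient of `x^k` in `(x + c + x⁻¹)^n` over `R`. -/
noncomputable def triCoeff (R : Type*) [CommRing R] (c : R) (n : ℕ) (k : ℤ) : R :=
  (((LaurentPolynomial.T 1 + LaurentPolynomial.C c + LaurentPolynomial.T (-1)) ^ n :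
      LaurentPolynomial R).coeff : ℤ →₀ R) k

/-!
Let `P = T + c + T⁻¹`, `Q = T - T⁻¹` and let `θ = T • d/dT` be the Euler derivation on Laurent
polynomials, so that `θ P = Q`, `θ Q = P - c` and `Q² = (P - c)² - 4`. The constant term of any
`θ f` vanishes; for `f = Q Pⁿ` the Leibniz rule gives
`θ f = (P - c) Pⁿ + n (P² - 2cP + c² - 4) Pⁿ⁻¹`, whose constant term is the recurrence.
-/

namespace LaurentPolynomial

variable {R : Type*} [CommRing R]

noncomputable def eulerLinearMap : R[T;T⁻¹] →ₗ[R] R[T;T⁻¹] where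
  toFun f := .ofCoeff ((fun k : ℤ => (k : R)) • f.coeff)
  map_add' f g := by ext k; simp [Finsupp.coe_pointwise_smul]
  map_smul' r f := by ext k; simp [Finsupp.coe_pointwise_smul]; ring

@[simp]
theorem coeff_eulerLinearMap (f : R[T;T⁻¹]) (k : ℤ) :
    (eulerLinearMap f).coeff k = k * f.coeff k := rfl

theorem eulerLinearMap_C_mul_T (a : R) (n : ℤ) :
    eulerLinearMap (C a * T n) = C (n * a) * T n := by
  ext k
  simp only [coeff_eulerLinearMap, ← single_eq_C_mul_T, AddMonoidAlgebra.coeff_single,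
    Finsupp.single_apply]
  split_ifs with h <;> simp [h]

theorem eulerLinearMap_mul (f g : R[T;T⁻¹]) :
    eulerLinearMap (f * g) = f * eulerLinearMap g + g * eulerLinearMap f := by
  induction f using LaurentPolynomial.induction_on' with
  | add p q hp hq => simp only [add_mul, map_add, hp, hq]; ring
  | C_mul_T m a =>
    induction g using LaurentPolynomial.induction_on' with
    | add p q hp hq => simp only [mul_add, map_add, hp, hq]; ring
    | C_mul_T n b =>
      rw [show C a * T m * (C b * T n) = C (a * b) * T (m + n) by rw [map_mul, T_add]; ring,
        eulerLinearMap_C_mul_T, eulerLinearMap_C_mul_T, eulerLinearMap_C_mul_T, T_add]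
      simp only [map_mul, map_add, map_intCast, Int.cast_add]
      ring

noncomputable def eulerDeriv : Derivation R R[T;T⁻¹] R[T;T⁻¹] :=
  Derivation.mk' eulerLinearMap eulerLinearMap_mul

@[simp]
theorem coeff_eulerDeriv (f : R[T;T⁻¹]) (k : ℤ) :
    (eulerDeriv f).coeff k = k * f.coeff k := rfl

theorem coeff_zero_eulerDeriv (f : R[T;T⁻¹]) : (eulerDeriv f).coeff 0 = 0 := by simp

theorem eulerDeriv_T (n : ℤ) : eulerDeriv (T n) = (n : R[T;T⁻¹]) * T n := by
  change eulerLinearMap (T n) = _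
  simpa using eulerLinearMap_C_mul_T (1 : R) n

theorem eulerDeriv_C (a : R) : eulerDeriv (C a) = 0 :=
  eulerDeriv.map_algebraMap a

end LaurentPolynomial

theorem natCast_mul_pow_sub_one_mul_pow_succ {A : Type*} [CommSemiring A] (a : A) (n k : ℕ) :
    (n : A) * a ^ (n - 1) * a ^ (k + 1) = n * a ^ (n + k) := by
  cases n with
  | zero => simp
  | succ n => rw [Nat.add_sub_cancel, mul_assoc, ← pow_add]; ring_nf

open LaurentPolynomial

section

variable {R : Type*} [CommRing R] (c : R)

theorem eulerDeriv_trinomial :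
    eulerDeriv (T 1 + C c + T (-1)) = (T 1 - T (-1) : R[T;T⁻¹]) := by
  simp only [map_add, eulerDeriv_T, eulerDeriv_C]
  push_cast
  ring

theorem eulerDeriv_T_sub_T_neg_one :
    eulerDeriv (T 1 - T (-1)) = (T 1 + T (-1) : R[T;T⁻¹]) := by
  simp only [map_sub, eulerDeriv_T]
  push_cast
  ring

theorem T_sub_T_neg_one_sq :
    (T 1 - T (-1)) ^ 2 =
      (T 1 + C c + T (-1)) ^ 2 - 2 * C c * (T 1 + C c + T (-1)) + C (c ^ 2 - 4) := by
  have hT : (T 1 * T (-1) : R[T;T⁻¹]) = 1 := by rw [← T_add, add_neg_cancel, T_zero]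
  simp only [map_sub, map_pow, map_ofNat]
  linear_combination (-4 : R[T;T⁻¹]) * hT

theorem eulerDeriv_T_sub_T_neg_one_mul_trinomial_pow (n : ℕ) :
    eulerDeriv ((T 1 - T (-1)) * (T 1 + C c + T (-1)) ^ n) =
      ((n : R) + 1) • (T 1 + C c + T (-1)) ^ (n + 1)
        - ((2 * n + 1) * c) • (T 1 + C c + T (-1)) ^ n
        + ((n : R) * (c ^ 2 - 4)) • (T 1 + C c + T (-1)) ^ (n - 1) := by
  have hQsq := T_sub_T_neg_one_sq c
  have h1 := natCast_mul_pow_sub_one_mul_pow_succ (T 1 + C c + T (-1)) n 1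
  have h0 := natCast_mul_pow_sub_one_mul_pow_succ (T 1 + C c + T (-1)) n 0
  rw [eulerDeriv.leibniz, eulerDeriv.leibniz_pow, eulerDeriv_trinomial, eulerDeriv_T_sub_T_neg_one]
  simp only [smul_eq_mul, nsmul_eq_mul, smul_eq_C_mul, map_add, map_sub, map_mul, map_pow,
    map_natCast, map_one, map_ofNat] at hQsq ⊢
  linear_combination
    ((n : R[T;T⁻¹]) * (T 1 + C c + T (-1)) ^ (n - 1)) * hQsq + h1 - 2 * C c * h0

theorem triCoeff_succ_zero_recurrence (n : ℕ) :
    ((n : R) + 1) * triCoeff R c (n + 1) 0 =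
      (2 * (n : R) + 1) * c * triCoeff R c n 0 - n * (c ^ 2 - 4) * triCoeff R c (n - 1) 0 := by
  have h := congrArg (fun f => f.coeff 0) (eulerDeriv_T_sub_T_neg_one_mul_trinomial_pow c n)
  simp only [coeff_zero_eulerDeriv, AddMonoidAlgebra.coeff_add, AddMonoidAlgebra.coeff_sub,
    AddMonoidAlgebra.coeff_smul, Finsupp.add_apply, Finsupp.sub_apply, Finsupp.smul_apply,
    smul_eq_mul] at h
  simp only [triCoeff]
  linear_combination -h

end

theorem central_tri_rec_general (c : ℤ) (n : ℕ) :
    ((n : ℤ) + 1) * triCoeff ℤ c (n + 1) 0 =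
      (2 * (n : ℤ) + 1) * c * triCoeff ℤ c n 0 -
        (n : ℤ) * (c ^ 2 - 4) * triCoeff ℤ c (n - 1) 0 :=
  triCoeff_succ_zero_recurrence c n

theorem central_tri_rec (c : ℤ) (hc : c ^ 2 - 4 ≠ 0) (n : ℕ) (hn : 0 < n) :
    ((n : ℤ) + 1) * triCoeff ℤ c (n + 1) 0 =
      (2 * (n : ℤ) + 1) * c * triCoeff ℤ c n 0 -
        (n : ℤ) * (c ^ 2 - 4) * triCoeff ℤ c (n - 1) 0 :=
  central_tri_rec_general c n
end

section
/- Let p be an odd prime and c an element of F_p with c^2 - 4 a nonsquare in F_p. Then the trinomial coefficient T(p-1,1), computed in F_p, equals c. -/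
open Polynomial
open LaurentPolynomial (T)

theorem LaurentPolynomial.coeff_T_mul_toLaurent {R : Type*} [Semiring R] (g : R[X]) (m : ℤ)
    (j : ℕ) : (T m * g.toLaurent).coeff (m + j) = g.coeff j := by
  rw [T, AddMonoidAlgebra.coeff_single_mul_apply, one_mul, neg_add_cancel_left, coeff_toLaurent]
  exact Finsupp.mapDomain_apply Nat.castEmbedding.injective _ j

theorem T_add_C_add_T_neg_one {R : Type*} [CommRing R] (c : R) :
    (T 1 + LaurentPolynomial.C c + T (-1) : LaurentPolynomial R) =
      T (-1) * (X ^ 2 + C c * X + 1 : R[X]).toLaurent := by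
  have h2 : (T (-1) * T 1 ^ 2 : LaurentPolynomial R) = T 1 := by
    rw [LaurentPolynomial.T_pow, ← LaurentPolynomial.T_add]; norm_num
  have h1 : (T (-1) * T 1 : LaurentPolynomial R) = 1 := by
    rw [← LaurentPolynomial.T_add]; norm_num
  simp only [map_add, map_mul, map_pow, map_one, toLaurent_X, toLaurent_C]
  linear_combination -h2 - LaurentPolynomial.C c * h1

theorem triCoeff_natCast {R : Type*} [CommRing R] (c : R) (n k : ℕ) :
    triCoeff R c n k = ((X ^ 2 + C c * X + 1 : R[X]) ^ n).coeff (n + k) := by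
  rw [triCoeff, T_add_C_add_T_neg_one, mul_pow, ← map_pow, LaurentPolynomial.T_pow,
    show (k : ℤ) = n * -1 + (n + k : ℕ) by push_cast; ring,
    LaurentPolynomial.coeff_T_mul_toLaurent]

section Lucas

variable {R S : Type*} [CommRing R] [CommRing S]

def lucasU (P Q : R) : ℕ → R
  | 0 => 0
  | 1 => 1
  | n + 2 => P * lucasU P Q (n + 1) - Q * lucasU P Q n

theorem sub_mul_lucasU (α β : R) (n : ℕ) :
    (α - β) * lucasU (α + β) (α * β) n = α ^ n - β ^ n := by
  induction n using Nat.twoStepInduction with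
  | zero => simp [lucasU]
  | one => simp [lucasU]
  | more n h₀ h₁ =>
    rw [lucasU]
    linear_combination (α + β) * h₁ - α * β * h₀

theorem map_lucasU (f : R →+* S) (P Q : R) (n : ℕ) :
    f (lucasU P Q n) = lucasU (f P) (f Q) n := by
  induction n using Nat.twoStepInduction with
  | zero => simp [lucasU]
  | one => simp [lucasU]
  | more n h₀ h₁ => simp [lucasU, h₀, h₁]

end Lucas

theorem coeff_mul_X_sq_add_C_mul_X_add_one {R : Type*} [CommRing R] (g : R[X]) (c : R) (m : ℕ) :
    (g * (X ^ 2 + C c * X + 1)).coeff (m + 2) =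
      g.coeff m + c * g.coeff (m + 1) + g.coeff (m + 2) := by
  rw [mul_add, mul_add, mul_one, coeff_add, coeff_add, coeff_mul_X_pow, ← mul_assoc, mul_comm g,
    mul_assoc, coeff_C_mul, coeff_mul_X]

theorem coeff_pow_sub_one_eq_lucasU {R : Type*} [CommRing R] {p : ℕ} [Fact p.Prime]
    [CharP R p] (c : R) {n : ℕ} (hn : n < p) :
    ((X ^ 2 + C c * X + 1 : R[X]) ^ (p - 1)).coeff (2 * p - 1 - n) = lucasU (-c) 1 n := by
  set f : R[X] := X ^ 2 + C c * X + 1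
  have hf : f.natDegree ≤ 2 := by unfold f; compute_degree
  have htop : (f ^ (p - 1)).coeff (2 * p - 2) = 1 := by
    rw [show 2 * p - 2 = (p - 1) * 2 by omega, coeff_pow_of_natDegree_le hf]
    simp [f, coeff_one]
  have hbeyond : (f ^ (p - 1)).coeff (2 * p - 1) = 0 :=
    coeff_eq_zero_of_natDegree_lt ((natDegree_pow_le_of_le _ hf).trans_lt (by omega))
  set g := f ^ (p - 1) with hg
  have hgf : g * f = X ^ (2 * p) + C (c ^ p) * X ^ p + 1 := by
    rw [hg, ← pow_succ, Nat.sub_add_cancel (Fact.out : p.Prime).one_le, add_pow_char, add_pow_char,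
      mul_pow, ← C_pow, ← pow_mul, one_pow, mul_comm]
  have hmid : ∀ m, p < m + 2 → m + 2 < 2 * p →
      g.coeff m + c * g.coeff (m + 1) + g.coeff (m + 2) = 0 := by
    intro m h₁ h₂
    rw [← coeff_mul_X_sq_add_C_mul_X_add_one, hgf]
    simp only [coeff_add, coeff_X_pow, coeff_C_mul, coeff_one]
    rw [if_neg (by omega), if_neg (by omega), if_neg (by omega)]
    ring
  induction n using Nat.twoStepInduction with
  | zero => exact hbeyond
  | one => rw [show 2 * p - 1 - 1 = 2 * p - 2 by omega, htop]; rfl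
  | more n h₀ h₁ =>
    have hrec := hmid (2 * p - 1 - (n + 2)) (by omega) (by omega)
    rw [show 2 * p - 1 - (n + 2) + 1 = 2 * p - 1 - (n + 1) by omega,
      show 2 * p - 1 - (n + 2) + 2 = 2 * p - 1 - n by omega, h₀ (by omega), h₁ (by omega)] at hrec
    rw [lucasU]
    linear_combination hrec

theorem pow_prime_eq_neg_of_sq_eq_of_not_isSquare {p : ℕ} [Fact p.Prime] (hp : p ≠ 2)
    {K : Type*} [CommRing K] [Algebra (ZMod p) K] {d : ZMod p} (hd : ¬IsSquare d) {δ : K}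
    (hδ : δ ^ 2 = algebraMap (ZMod p) K d) : δ ^ p = -δ := by
  have hd0 : d ≠ 0 := by rintro rfl; exact hd IsSquare.zero
  have heuler : d ^ (p / 2) = -1 :=
    (ZMod.pow_div_two_eq_neg_one_or_one p hd0).resolve_left
      (mt (ZMod.euler_criterion p hd0).mpr hd)
  have hodd : p = 2 * (p / 2) + 1 :=
    (Nat.two_mul_div_two_add_one_of_odd ((Fact.out : p.Prime).odd_of_ne_two hp)).symm
  rw [hodd, pow_succ, pow_mul, hδ, ← map_pow, heuler, map_neg, map_one, neg_one_mul]

theorem exists_roots_swapped_by_frobenius {p : ℕ} [Fact p.Prime] (hp : p ≠ 2) {c : ZMod p}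
    (hc : ¬IsSquare (c ^ 2 - 4)) :
    ∃ α β : AlgebraicClosure (ZMod p), α + β = -algebraMap _ _ c ∧ α * β = 1 ∧ α ≠ β ∧
      α ^ p = β ∧ β ^ p = α := by
  set φ := algebraMap (ZMod p) (AlgebraicClosure (ZMod p))
  obtain ⟨δ, hδ⟩ := IsAlgClosed.exists_pow_nat_eq (φ (c ^ 2 - 4)) two_pos
  have hδp := pow_prime_eq_neg_of_sq_eq_of_not_isSquare hp hc hδ
  have hδ0 : δ ≠ 0 := by
    rintro rfl
    refine hc ⟨0, φ.injective ?_⟩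
    rw [← hδ, map_mul, map_zero]; ring
  have hhalf : φ 2⁻¹ * 2 = 1 := by
    have h2 : (2 : ZMod p) ≠ 0 := Ring.two_ne_zero (by rwa [ZMod.ringChar_zmod_n])
    rw [← map_ofNat φ, ← map_mul, inv_mul_cancel₀ h2, map_one]
  have hfrob : ∀ x, (φ 2⁻¹ * (x - φ c)) ^ p = φ 2⁻¹ * (x ^ p - φ c) := fun x => by
    rw [mul_pow, sub_pow_char, ← map_pow, ← map_pow, ZMod.pow_card, ZMod.pow_card]
  have hδ2 : δ ^ 2 = φ c ^ 2 - 4 := by rw [hδ, map_sub, map_pow, map_ofNat]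
  refine ⟨φ 2⁻¹ * (δ - φ c), φ 2⁻¹ * (-δ - φ c), ?_, ?_, ?_, ?_, ?_⟩
  · linear_combination (-φ c) * hhalf
  · linear_combination -φ 2⁻¹ ^ 2 * hδ2 + (φ 2⁻¹ * 2 + 1) * hhalf
  · exact fun h => hδ0 (by linear_combination h - δ * hhalf)
  · rw [hfrob, hδp]
  · rw [hfrob, Odd.neg_pow ((Fact.out : p.Prime).odd_of_ne_two hp), hδp, neg_neg]

theorem lucasU_neg_one_sub_one_of_not_isSquare {p : ℕ} [Fact p.Prime] (hp : p ≠ 2) {c : ZMod p}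
    (hc : ¬IsSquare (c ^ 2 - 4)) : lucasU (-c) 1 (p - 1) = c := by
  obtain ⟨α, β, hadd, hmul, hne, hαp, hβp⟩ := exists_roots_swapped_by_frobenius hp hc
  have hp1 : 1 ≤ p := (Fact.out : p.Prime).one_le
  have hpow : ∀ x y : AlgebraicClosure (ZMod p), x * y = 1 → x ^ p = y → x ^ (p - 1) = y ^ 2 :=
    fun x y hxy hxp => calc
      x ^ (p - 1) = x ^ (p - 1) * (x * y) := by rw [hxy, mul_one]
      _ = x ^ p * y := by rw [← mul_assoc, ← pow_succ, Nat.sub_add_cancel hp1]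
      _ = y ^ 2 := by rw [hxp, sq]
  apply (algebraMap (ZMod p) (AlgebraicClosure (ZMod p))).injective
  apply mul_left_cancel₀ (sub_ne_zero.mpr hne)
  rw [map_lucasU, map_neg, map_one, ← hadd, ← hmul, sub_mul_lucasU, hpow α β hmul hαp,
    hpow β α (by rw [mul_comm, hmul]) hβp]
  linear_combination (β - α) * hadd

theorem tri_p_sub_one_one_nonsq (p : ℕ) [Fact p.Prime] (hp : p ≠ 2) (c : ZMod p)
    (hsq : ¬ IsSquare (c ^ 2 - 4)) :
    triCoeff (ZMod p) c (p - 1) 1 = c := by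
  have hp1 : 1 ≤ p := (Fact.out : p.Prime).one_le
  have hcoeff := coeff_pow_sub_one_eq_lucasU c (Nat.sub_lt hp1 one_pos)
  rw [show 2 * p - 1 - (p - 1) = p - 1 + 1 by omega] at hcoeff
  change triCoeff (ZMod p) c (p - 1) ((1 : ℕ) : ℤ) = c
  rw [triCoeff_natCast, hcoeff, lucasU_neg_one_sub_one_of_not_isSquare hp hsq]
end

section
/- Let p be an odd prime and c ∈ F_p with c ≠ ±2 and c^2 - 4 a nonzero square in F_p. Then the trinomial coefficient T(p-2,0), computed in F_p, equals c/(c^2-4). -/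
open Polynomial Finset

namespace LaurentPolynomial

variable {R : Type*} [CommSemiring R]

theorem coeff_toLaurent_natCast (f : R[X]) (n : ℕ) : (toLaurent f).coeff n = f.coeff n :=
  Finsupp.mapDomain_apply Nat.cast_injective f.toFinsupp.coeff n

theorem coeff_mul_T (f : LaurentPolynomial R) (m n : ℤ) : (f * T m).coeff n = f.coeff (n - m) := by
  simpa [sub_eq_add_neg] using AddMonoidAlgebra.coeff_mul_single_apply f 1 m n

end LaurentPolynomial

open LaurentPolynomial in
theorem triCoeff_zero_eq_coeff (R : Type*) [CommRing R] (c : R) (n : ℕ) :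
    triCoeff R c n 0 = ((X ^ 2 + Polynomial.C c * X + 1 : R[X]) ^ n).coeff n := by
  have hshift : (T 1 + LaurentPolynomial.C c + T (-1) : LaurentPolynomial R) =
      toLaurent (X ^ 2 + Polynomial.C c * X + 1) * T (-1) := by
    simp only [map_add, map_mul, map_pow, toLaurent_X, toLaurent_C, map_one, add_mul, one_mul,
      mul_assoc, T_pow, ← T_add]
    norm_num
  rw [triCoeff, hshift, mul_pow, ← map_pow, T_pow, coeff_mul_T, zero_sub, mul_neg_one, neg_neg,
    coeff_toLaurent_natCast]

namespace FiniteField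

variable {K : Type*} [Field K] [Fintype K]

local notation "q" => Fintype.card K

theorem sum_pow_of_ne_zero {i : ℕ} (hi : i ≠ 0) :
    ∑ x : K, x ^ i = if q - 1 ∣ i then -1 else 0 := by
  classical
  rw [← sum_pow_units K i]
  exact (Fintype.sum_of_injective _ Units.val_injective _ _
    (fun x hx => by rw [not_ne_iff.mp (mt isUnit_iff_ne_zero.mpr hx), zero_pow hi])
    fun _ => rfl).symm

theorem pow_card_sub_two_eq_inv (hK : q ≠ 2) (a : K) : a ^ (q - 2) = a⁻¹ := by
  have hq : 1 < q := Fintype.one_lt_card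
  rcases eq_or_ne a 0 with rfl | ha
  · rw [zero_pow (by omega), inv_zero]
  · refine eq_inv_of_mul_eq_one_left ?_
    rw [← pow_succ, show q - 2 + 1 = q - 1 by omega, pow_card_sub_one_eq_one a ha]

theorem coeff_card_sub_two_eq_neg_sum {g : K[X]} (hg : g.natDegree ≤ 2 * (q - 2)) :
    g.coeff (q - 2) = -∑ x, g.eval x * x := by
  have hq : 1 < q := Fintype.one_lt_card
  have hlt : g.natDegree < 2 * q - 3 := by omega
  have hsum : ∑ x, g.eval x * x =
      ∑ i ∈ range (2 * q - 3), g.coeff i * if q - 1 ∣ i + 1 then -1 else 0 := by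
    simp_rw [eval_eq_sum_range' hlt, sum_mul, mul_assoc, ← pow_succ]
    rw [sum_comm]
    simp_rw [← mul_sum, sum_pow_of_ne_zero (Nat.succ_ne_zero _)]
  rw [hsum, sum_eq_single (q - 2)]
  · rw [show q - 2 + 1 = q - 1 by omega, if_pos dvd_rfl, mul_neg_one, neg_neg]
  · intro i hi hne
    rw [if_neg, mul_zero]
    rintro ⟨k, hk⟩
    rw [mem_range] at hi
    rcases k with _ | _ | k
    · omega
    · omega
    · have := Nat.mul_le_mul_left (q - 1) (show 2 ≤ k + 1 + 1 by omega)
      omega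
  · intro h
    exact absurd (mem_range.mpr (by omega)) h

theorem sum_inv_sub (hK : q ≠ 2) (a : K) : ∑ x, (x - a)⁻¹ = 0 := by
  have hq : 1 < q := Fintype.one_lt_card
  calc ∑ x, (x - a)⁻¹ = ∑ x, x⁻¹ := (Equiv.subRight a).sum_comp (·⁻¹)
    _ = ∑ x, x ^ (q - 2) := by simp_rw [pow_card_sub_two_eq_inv hK]
    _ = 0 := sum_pow_lt_card_sub_one K _ (by omega)

theorem sum_inv_sub_mul_sub_mul (hK : q ≠ 2) {r s : K} (hrs : r ≠ s) :
    ∑ x, ((x - r) * (x - s))⁻¹ * x = (r + s) / (r - s) ^ 2 := by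
  classical
  set φ : K → K := fun x => r * (x - r)⁻¹ - s * (x - s)⁻¹
  have hφ : ∑ x, φ x = 0 := by
    simp only [φ, sum_sub_distrib, ← mul_sum, sum_inv_sub hK, mul_zero, sub_zero]
  have hpair : ∀ x ∈ ({r, s} : Finset K)ᶜ, ((x - r) * (x - s))⁻¹ * x = φ x / (r - s) := by
    intro x hx
    simp only [mem_compl, mem_insert, mem_singleton, not_or] at hx
    have hr : x - r ≠ 0 := sub_ne_zero.mpr hx.1
    have hs : x - s ≠ 0 := sub_ne_zero.mpr hx.2
    simp only [φ]
    field_simp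
    ring
  have hcompl : ∑ x ∈ {r, s}ᶜ, φ x = -(φ r + φ s) := by
    rw [← sum_pair hrs, eq_neg_iff_add_eq_zero, sum_compl_add_sum, hφ]
  rw [← sum_compl_add_sum {r, s}, sum_congr rfl hpair, ← sum_div, hcompl, sum_pair hrs]
  simp only [φ, sub_self, inv_zero, mul_zero, zero_mul, sub_zero, zero_sub, add_zero]
  field_simp
  ring

theorem triCoeff_card_sub_two_zero_of_roots (hK : q ≠ 2) {c r s : K} (hadd : r + s = -c)
    (hmul : r * s = 1) (hrs : r ≠ s) : triCoeff K c (q - 2) 0 = c / (c ^ 2 - 4) := by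
  have hdeg : ((X ^ 2 + Polynomial.C c * X + 1 : K[X]) ^ (q - 2)).natDegree ≤ 2 * (q - 2) := by
    refine (natDegree_pow_le_of_le _ ?_).trans_eq (mul_comm _ _)
    compute_degree
  have heval : ∀ x : K, ((X ^ 2 + Polynomial.C c * X + 1) ^ (q - 2)).eval x =
      ((x - r) * (x - s))⁻¹ := by
    intro x
    rw [← pow_card_sub_two_eq_inv hK]
    simp only [eval_pow, eval_add, eval_mul, eval_X, eval_C, eval_one]
    congr 1
    linear_combination x * hadd - hmul
  have hdisc : (r - s) ^ 2 = c ^ 2 - 4 := by linear_combination (r + s - c) * hadd - 4 * hmul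
  rw [triCoeff_zero_eq_coeff, coeff_card_sub_two_eq_neg_sum hdeg]
  simp_rw [heval, sum_inv_sub_mul_sub_mul hK hrs, hdisc, hadd, neg_div, neg_neg]

theorem triCoeff_card_sub_two_zero (hK : ringChar K ≠ 2) {c : K} (hsq : IsSquare (c ^ 2 - 4))
    (hne : c ^ 2 - 4 ≠ 0) : triCoeff K c (q - 2) 0 = c / (c ^ 2 - 4) := by
  obtain ⟨d, hd⟩ := hsq
  have h2 : (2 : K) ≠ 0 := Ring.two_ne_zero hK
  have hq : q ≠ 2 := fun hq => h2 (by exact_mod_cast hq ▸ cast_card_eq_zero K)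
  have hd0 : d ≠ 0 := by rintro rfl; exact hne (by rw [hd, mul_zero])
  refine triCoeff_card_sub_two_zero_of_roots hq (r := (-c + d) / 2) (s := (-c - d) / 2)
    (by field_simp; ring) (by field_simp; linear_combination hd) ?_
  intro h
  field_simp at h
  exact hd0 ((mul_eq_zero.mp (by linear_combination h : (2 : K) * d = 0)).resolve_left h2)

end FiniteField

theorem tri_p_sub_two_zero_sq_general (p : ℕ) [Fact p.Prime] (hp : p ≠ 2) (c : ZMod p)
    (hsq : IsSquare (c ^ 2 - 4)) (hne : c ^ 2 - 4 ≠ 0) :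
    triCoeff (ZMod p) c (p - 2) 0 = c / (c ^ 2 - 4) := by
  have := FiniteField.triCoeff_card_sub_two_zero (by rwa [ZMod.ringChar_zmod_n]) hsq hne
  rwa [ZMod.card] at this

theorem tri_p_sub_two_zero_sq (p : ℕ) [Fact p.Prime] (hp : p ≠ 2) (c : ZMod p)
    (hc2 : c ≠ 2) (hc2' : c ≠ -2) (hsq : IsSquare (c ^ 2 - 4)) (hne : c ^ 2 - 4 ≠ 0) :
    triCoeff (ZMod p) c (p - 2) 0 = c / (c ^ 2 - 4) :=
  tri_p_sub_two_zero_sq_general p hp c hsq hne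
end

section
/- Let p be an odd prime and c ∈ F_p with c ≠ ±2 and c^2 - 4 a nonzero square in F_p. Then the trinomial coefficient T(p-2, (p-1)/2), computed in F_p, equals (c/(2(c^2-4))) * χ(-c-2), where χ is the quadratic character of F_p. -/
/-!
Let `u` be a root of `X² + cX + 1`, so that `x + c + x⁻¹ = x⁻¹ (x - u⁻¹) (x - u)`, and write
`p = 2N + 1`. In characteristic `p`, `(X - a)^(p-1)` is the geometric sum `∑ Xⁱ a^(p-1-i)`;
differentiating it shows that `(X - a)^(p-2)` has coefficients `-(j+1) a^(p-2-j)`. Since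
trinomial coefficients are symmetric under `k ↦ -k`, the wanted one is the coefficient of
`X^(N-1)` in `(X - u⁻¹)^(p-2) (X - u)^(p-2)`, a range where no truncation occurs; it equals
`u^(N+1) ∑_{i<N} (i+1)(N-i) u^(2i)`. Because `(u²)^N = 1`, this weighted geometric sum is
`N (u² + 1) / (u² - 1)²`, and `N = -1/2` in `𝔽_p`. Finally `u^N = χ(u) = χ(-c-2)` by Euler's
criterion, as `-c - 2 = u (u⁻¹ - 1)²`.
-/

open Polynomial Finset

section TrinomialCoefficient

open LaurentPolynomial

variable {R : Type*} [CommRing R]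

lemma triCoeff_neg (c : R) (n : ℕ) (k : ℤ) : triCoeff R c n (-k) = triCoeff R c n k := by
  have hinv : invert (T 1 + LaurentPolynomial.C c + T (-1) : R[T;T⁻¹]) =
      T 1 + LaurentPolynomial.C c + T (-1) := by
    simp only [map_add, invert_T, invert_C, neg_neg]
    abel
  rw [triCoeff, ← invert_apply, map_pow, hinv, triCoeff]

lemma triCoeff_sub_eq_coeff_pow (c : R) (n m : ℕ) :
    triCoeff R c n ((m : ℤ) - n) = ((X ^ 2 + Polynomial.C c * X + 1 : R[X]) ^ n).coeff m := by
  have hshift : (T 1 + LaurentPolynomial.C c + T (-1) : R[T;T⁻¹]) =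
      T (-1) * toLaurent (X ^ 2 + Polynomial.C c * X + 1 : R[X]) := by
    simp only [map_add, map_mul, map_pow, map_one, toLaurent_X, toLaurent_C, T_pow, mul_add,
      mul_left_comm (T (-1)), ← T_add, mul_one]
    norm_num
  rw [triCoeff, hshift, mul_pow, T_pow, ← map_pow, show ((n : ℤ) * -1) = -n by ring, T,
    AddMonoidAlgebra.coeff_single_mul_apply, one_mul, neg_neg, add_sub_cancel, coeff_toLaurent]
  exact Finsupp.mapDomain_apply Nat.cast_injective _ _

end TrinomialCoefficient

section CharP

variable {R : Type*} [CommRing R] (p : ℕ) [Fact p.Prime] [CharP R p] (a : R)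

lemma X_sub_C_pow_sub_one_eq_geom_sum :
    (X - C a) ^ (p - 1) = ∑ i ∈ range p, X ^ i * C a ^ (p - 1 - i) := by
  apply (monic_X_sub_C a).isRegular.right
  dsimp only
  rw [← pow_succ, Nat.sub_add_cancel (Fact.out : p.Prime).one_le, sub_pow_char, geom_sum₂_mul]

lemma coeff_X_sub_C_pow_sub_one {i : ℕ} (hi : i < p) :
    ((X - C a) ^ (p - 1)).coeff i = a ^ (p - 1 - i) := by
  rw [X_sub_C_pow_sub_one_eq_geom_sum, finsetSum_coeff]
  simp only [← C_pow, mul_comm (X ^ _), coeff_C_mul_X_pow]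
  simp [hi]

lemma coeff_X_sub_C_pow_sub_two {j : ℕ} (hj : j + 1 < p) :
    ((X - C a) ^ (p - 2)).coeff j = -((j + 1) * a ^ (p - 2 - j)) := by
  have hderiv := derivative_X_sub_C_pow a (p - 1)
  have hp1 : ((p - 1 : ℕ) : R) = -1 := by
    rw [Nat.cast_sub (Fact.out : p.Prime).one_le, CharP.cast_eq_zero, Nat.cast_one, zero_sub]
  rw [hp1, map_neg, map_one, neg_one_mul, Nat.sub_sub, ← neg_eq_iff_eq_neg] at hderiv
  rw [← hderiv, coeff_neg, coeff_derivative, coeff_X_sub_C_pow_sub_one p a hj,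
    show p - 1 - (j + 1) = p - 2 - j by omega, mul_comm]

end CharP

section WeightedGeomSum

variable {R : Type*} [CommRing R] (w : R)

lemma sub_one_sq_mul_sum_range_succ_mul_pow (n : ℕ) :
    (w - 1) ^ 2 * ∑ i ∈ range n, ((i : R) + 1) * w ^ i =
      n * w ^ (n + 1) - (n + 1) * w ^ n + 1 := by
  induction n with
  | zero => simp
  | succ n ih =>
    rw [sum_range_succ, mul_add, ih]
    push_cast
    ring

lemma sub_one_pow_three_mul_sum_range_succ_mul_sub_mul_pow (n : ℕ) :
    (w - 1) ^ 3 * ∑ i ∈ range n, ((i : R) + 1) * (n - i) * w ^ i =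
      n * w ^ (n + 2) - (n + 2) * w ^ (n + 1) + (n + 2) * w - n := by
  induction n with
  | zero => simp
  | succ n ih =>
    have hsplit : ∑ i ∈ range (n + 1), ((i : R) + 1) * ((n + 1 : ℕ) - i) * w ^ i =
        ∑ i ∈ range n, ((i : R) + 1) * (n - i) * w ^ i +
          ∑ i ∈ range (n + 1), ((i : R) + 1) * w ^ i := by
      rw [sum_range_succ, sum_range_succ (fun i => ((i : R) + 1) * w ^ i), ← add_assoc,
        ← sum_add_distrib]
      congr 1
      · exact sum_congr rfl fun i _ => by push_cast; ring
      · push_cast; ring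
    rw [hsplit, mul_add, ih, pow_succ' _ 2, mul_assoc, sub_one_sq_mul_sum_range_succ_mul_pow]
    push_cast
    ring

lemma sub_one_sq_mul_sum_range_succ_mul_sub_mul_pow_of_pow_eq_one [IsDomain R] {n : ℕ}
    (hw : w ^ n = 1) (hw1 : w ≠ 1) :
    (w - 1) ^ 2 * ∑ i ∈ range n, ((i : R) + 1) * (n - i) * w ^ i = n * (w + 1) := by
  apply mul_left_cancel₀ (sub_ne_zero.mpr hw1)
  linear_combination sub_one_pow_three_mul_sum_range_succ_mul_sub_mul_pow w n +
    (n * w ^ 2 - (n + 2) * w) * hw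

end WeightedGeomSum

section Field

variable {K : Type*} [Field K]

lemma X_sq_add_C_mul_X_add_one_eq_mul {c u : K} (hu : u ^ 2 + c * u + 1 = 0) :
    (X ^ 2 + C c * X + 1 : K[X]) = (X - C u⁻¹) * (X - C u) := by
  have hu0 : u ≠ 0 := by
    rintro rfl
    simp at hu
  have hroots : C u⁻¹ + C u = -C c := by
    rw [← C_add, ← C_neg]
    congr 1
    field_simp
    linear_combination hu
  have hprod : C u⁻¹ * C u = (1 : K[X]) := by rw [← C_mul, inv_mul_cancel₀ hu0, C_1]
  linear_combination X * hroots - hprod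

variable (p : ℕ) [Fact p.Prime] [CharP K p] {N : ℕ}

lemma coeff_X_sub_C_inv_pow_mul_X_sub_C_pow (hN : p = 2 * N + 1) {u : K}
    (hu : u ^ (p - 1) = 1) :
    ((X - C u⁻¹) ^ (p - 2) * (X - C u) ^ (p - 2)).coeff (N - 1) =
      u ^ (N + 1) * ∑ i ∈ range N, ((i : K) + 1) * (N - i) * (u ^ 2) ^ i := by
  have hN0 : N ≠ 0 := by
    have := (Fact.out : p.Prime).two_le
    omega
  have hu0 : u ≠ 0 := by
    rintro rfl
    simp [zero_pow (by omega : p - 1 ≠ 0)] at hu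
  rw [coeff_mul, Nat.sum_antidiagonal_eq_sum_range_succ_mk, Nat.succ_eq_add_one,
    Nat.sub_one_add_one hN0, mul_sum]
  refine sum_congr rfl fun i hi => ?_
  have hiN : i < N := mem_range.mp hi
  have hinv : u⁻¹ ^ (p - 2 - i) = u ^ (i + 1) := by
    rw [show p - 2 - i = p - 1 - (i + 1) by omega, inv_pow, pow_sub₀ _ hu0 (by omega), hu,
      one_mul, inv_inv]
  rw [coeff_X_sub_C_pow_sub_two p _ (by omega), coeff_X_sub_C_pow_sub_two p _ (by omega), hinv,
    show p - 2 - (N - 1 - i) = N + i by omega, Nat.cast_sub (by omega), Nat.cast_sub (by omega)]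
  push_cast
  ring

lemma triCoeff_sub_two_half (hN : p = 2 * N + 1) {c u : K} (hu : u ^ 2 + c * u + 1 = 0)
    (hup : u ^ (p - 1) = 1) (hu2 : u ^ 2 ≠ 1) :
    triCoeff K c (p - 2) N = c / (2 * (c ^ 2 - 4)) * u ^ N := by
  have hu0 : u ≠ 0 := by
    rintro rfl
    simp at hu
  have h2N : 2 * (N : K) = -1 := by
    have hp0 : ((2 * N + 1 : ℕ) : K) = 0 := by rw [← hN, CharP.cast_eq_zero]
    push_cast at hp0
    linear_combination hp0
  have h2 : (2 : K) ≠ 0 := by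
    rintro h
    simp [h] at h2N
  have hdisc : (u ^ 2 - 1) ^ 2 = (c ^ 2 - 4) * u ^ 2 := by
    linear_combination (u ^ 2 + 1 - c * u) * hu
  have hc4 : c ^ 2 - 4 ≠ 0 := by
    rintro h
    rw [h, zero_mul, sq_eq_zero_iff, sub_eq_zero] at hdisc
    exact hu2 hdisc
  have hsum := sub_one_sq_mul_sum_range_succ_mul_sub_mul_pow_of_pow_eq_one (u ^ 2) (n := N)
    (by rw [← pow_mul, ← hup, hN, Nat.add_sub_cancel]) hu2
  rw [← triCoeff_neg, show -(N : ℤ) = ((N - 1 : ℕ) : ℤ) - ((p - 2 : ℕ) : ℤ) by omega,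
    triCoeff_sub_eq_coeff_pow, X_sq_add_C_mul_X_add_one_eq_mul hu, mul_pow,
    coeff_X_sub_C_inv_pow_mul_X_sub_C_pow p hN hup, div_mul_eq_mul_div,
    eq_div_iff (mul_ne_zero h2 hc4)]
  apply mul_left_cancel₀ (pow_ne_zero 2 hu0)
  linear_combination
    (-2 * u ^ (N + 1) * ∑ i ∈ range N, ((i : K) + 1) * (N - i) * (u ^ 2) ^ i) * hdisc +
      2 * u ^ (N + 1) * hsum + u ^ (N + 1) * (u ^ 2 + 1) * h2N - u ^ (N + 1) * hu

end Field

lemma quadraticChar_neg_sub_two_eq_pow {F : Type*} [Field F] [Fintype F] [DecidableEq F]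
    (hF : ringChar F ≠ 2) {c u : F} (hu : u ^ 2 + c * u + 1 = 0) (hu1 : u ≠ 1) :
    ((quadraticChar F (-c - 2) : ℤ) : F) = u ^ (Fintype.card F / 2) := by
  have hu0 : u ≠ 0 := by
    rintro rfl
    simp at hu
  have hsq : -c - 2 = (u⁻¹ - 1) ^ 2 * u := by
    field_simp
    linear_combination -hu
  rw [quadraticChar_eq_pow_of_char_ne_two' hF, hsq, mul_pow, ← pow_mul,
    Nat.two_mul_odd_div_two (FiniteField.odd_card_of_char_ne_two hF),
    FiniteField.pow_card_sub_one_eq_one _ (sub_ne_zero.mpr (inv_ne_one.mpr hu1)), one_mul]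

theorem tri_p_sub_two_half_sq_general (p : ℕ) [Fact p.Prime] (hp : p ≠ 2) (c : ZMod p)
    (hc2 : c ≠ 2) (hc2' : c ≠ -2) (hsq : IsSquare (c ^ 2 - 4)) :
    triCoeff (ZMod p) c (p - 2) (((p - 1) / 2 : ℕ) : ℤ) =
      c / (2 * (c ^ 2 - 4)) * ((quadraticChar (ZMod p) (-c - 2) : ℤ) : ZMod p) := by
  obtain ⟨N, hN⟩ : ∃ N, p = 2 * N + 1 := (Fact.out : p.Prime).odd_of_ne_two hp
  have hchar : ringChar (ZMod p) ≠ 2 := by rwa [ZMod.ringChar_zmod_n]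
  obtain ⟨d, hd⟩ := hsq
  obtain ⟨u, hu⟩ : ∃ u : ZMod p, u ^ 2 + c * u + 1 = 0 :=
    ⟨(d - c) / 2, by field_simp [Ring.two_ne_zero hchar]; linear_combination -hd⟩
  have hu0 : u ≠ 0 := by
    rintro rfl
    simp at hu
  have hu1 : u ≠ 1 := by
    rintro rfl
    exact hc2' (by linear_combination hu)
  have hu2 : u ^ 2 ≠ 1 := by
    rw [Ne, sq_eq_one_iff]
    rintro (rfl | rfl)
    · exact hu1 rfl
    · exact hc2 (by linear_combination -hu)
  rw [show (p - 1) / 2 = N by omega,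
    triCoeff_sub_two_half p hN hu (ZMod.pow_card_sub_one_eq_one hu0) hu2,
    quadraticChar_neg_sub_two_eq_pow hchar hu hu1, ZMod.card, show p / 2 = N by omega]

theorem tri_p_sub_two_half_sq (p : ℕ) [Fact p.Prime] (hp : p ≠ 2) (c : ZMod p)
    (hc2 : c ≠ 2) (hc2' : c ≠ -2) (hsq : IsSquare (c ^ 2 - 4)) (hne : c ^ 2 - 4 ≠ 0) :
    triCoeff (ZMod p) c (p - 2) (((p - 1) / 2 : ℕ) : ℤ) =
      c / (2 * (c ^ 2 - 4)) * ((quadraticChar (ZMod p) (-c - 2) : ℤ) : ZMod p) :=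
  tri_p_sub_two_half_sq_general p hp c hc2 hc2' hsq
end

section
/- Let R be a commutative ring, m an odd positive integer, and a_0, ..., a_{m-1} ∈ R with a_i = a_{m-i} for 1 ≤ i ≤ m-1. Then there exists v ∈ R such that det C(a_0,...,a_{m-1}) = (Σ_{i=0}^{m-1} a_i) * v^2, where C is the m×m circulant matrix with (i,j)-entry a_{i-j mod m}. -/
/-!
Write `m = 2k + 1`. The vectors `𝟙`, `eⱼ + e₋ⱼ` and `eₖ₊ⱼ` (`1 ≤ j ≤ k`) form a basis of `Rᵐ`
whose dual coordinates are explicit, so the change of basis is unimodular. The circulant `C`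
fixes `𝟙` up to the factor `∑ aᵢ`, and, `a` being symmetric, it preserves the submodule `V⁺` of
symmetric vectors, which is spanned by the first `k + 1` basis vectors. In this basis `C` is
therefore block upper triangular and `det C = (∑ aᵢ) · det A · det B`, with `A` the matrix of
`C` on `V⁺ / R𝟙` and `B` its matrix on `Rᵐ / V⁺`. The cyclic shift by `k` commutes with `C`
and induces a map `V⁺ / R𝟙 → Rᵐ / V⁺` whose matrix `S` is unitriangular; hence `B S = S A`
and `det A = det B`.
-/

open Matrix Finset

theorem ZMod.natCast_eq_natCast_iff_of_lt {n a b : ℕ} (ha : a < n) (hb : b < n) :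
    (a : ZMod n) = b ↔ a = b := by
  rw [ZMod.natCast_eq_natCast_iff', Nat.mod_eq_of_lt ha, Nat.mod_eq_of_lt hb]

theorem ZMod.natCast_eq_zero_iff_of_lt {n a : ℕ} (ha : a < n) : (a : ZMod n) = 0 ↔ a = 0 := by
  rw [← Nat.cast_zero, ZMod.natCast_eq_natCast_iff_of_lt ha (by omega)]

theorem ZMod.sum_range_natCast {M : Type*} [AddCommMonoid M] (n : ℕ) [NeZero n] (f : ZMod n → M) :
    ∑ i ∈ range n, f i = ∑ i, f i :=
  sum_nbij' (↑) ZMod.val (by simp) (by simp [ZMod.val_lt])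
    (fun i hi => ZMod.val_cast_of_lt (mem_range.mp hi)) (by simp) (by simp)

namespace Matrix

variable {R : Type*} [CommRing R]

theorem det_mul_mul_of_mul_eq_one {ι κ : Type*} [Fintype ι] [Fintype κ] [DecidableEq ι]
    [DecidableEq κ] (e : ι ≃ κ) {Q : Matrix ι κ R} {P : Matrix κ ι R} (hQP : Q * P = 1)
    (M : Matrix κ κ R) : (Q * M * P).det = M.det := by
  have hdet : (Q.submatrix id e).det * (P.submatrix e id).det = 1 := by
    rw [← det_mul, submatrix_mul_equiv, hQP, submatrix_id_id, det_one]
  rw [← submatrix_id_id (Q * M * P), ← submatrix_mul_equiv _ _ _ e, ← submatrix_mul_equiv _ _ _ e,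
    det_mul, det_mul, det_submatrix_equiv_self, mul_right_comm, hdet, one_mul]

theorem det_eq_of_mul_eq_mul_of_isUnit {κ : Type*} [Fintype κ] [DecidableEq κ]
    {A B S : Matrix κ κ R} (hS : IsUnit S.det) (h : B * S = S * A) : A.det = B.det := by
  have := congrArg det h
  rw [det_mul, det_mul, mul_comm] at this
  exact (hS.mul_left_cancel this).symm

variable {κ₁ κ₂ : Type*} [Fintype κ₁] [Fintype κ₂]

theorem det_of_unit_sum_sum_blockTriangular [DecidableEq κ₁] [DecidableEq κ₂]
    (M : Matrix (Unit ⊕ (κ₁ ⊕ κ₂)) (Unit ⊕ (κ₁ ⊕ κ₂)) R)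
    (h₁ : ∀ x, M (.inr x) (.inl ()) = 0) (h₂ : ∀ i j, M (.inr (.inr i)) (.inr (.inl j)) = 0) :
    M.det = M (.inl ()) (.inl ()) * (M.submatrix (.inr ∘ .inl) (.inr ∘ .inl)).det *
      (M.submatrix (.inr ∘ .inr) (.inr ∘ .inr)).det := by
  have e₁ : M.toBlocks₂₁ = 0 := by ext x u; exact h₁ x
  have e₂ : M.toBlocks₂₂.toBlocks₂₁ = 0 := by ext i j; exact h₂ i j
  conv_lhs => rw [← M.fromBlocks_toBlocks, e₁, det_fromBlocks_zero₂₁,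
    ← M.toBlocks₂₂.fromBlocks_toBlocks, e₂, det_fromBlocks_zero₂₁, det_unique]
  rw [mul_assoc]
  rfl

theorem corner_mul_eq_mul_corner_of_commute
    {D X : Matrix (Unit ⊕ (κ₁ ⊕ κ₂)) (Unit ⊕ (κ₁ ⊕ κ₂)) R} (hDX : D * X = X * D)
    (hD₁ : ∀ x, D (.inr x) (.inl ()) = 0) (hD₂ : ∀ i j, D (.inr (.inr i)) (.inr (.inl j)) = 0)
    (hX : ∀ i, X (.inr (.inr i)) (.inl ()) = 0) :
    D.submatrix (.inr ∘ .inr) (.inr ∘ .inr) * X.submatrix (.inr ∘ .inr) (.inr ∘ .inl) =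
      X.submatrix (.inr ∘ .inr) (.inr ∘ .inl) * D.submatrix (.inr ∘ .inl) (.inr ∘ .inl) := by
  ext i j
  have := congrFun (congrFun hDX (.inr (.inr i))) (.inr (.inl j))
  simpa [mul_apply, Fintype.sum_sum_type, hD₁, hD₂, hX] using this

theorem circulant_mulVec_one {n : Type*} [Fintype n] [AddCommGroup n] (v : n → R) :
    circulant v *ᵥ 1 = fun _ => ∑ i, v i := by
  ext i
  simpa [mulVec, dotProduct] using Fintype.sum_equiv (Equiv.subLeft i) _ _ (fun _ => rfl)

theorem circulant_mulVec_single_one {n : Type*} [Fintype n] [AddCommGroup n] [DecidableEq n]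
    (v : n → R) (j : n) : circulant v *ᵥ Pi.single j 1 = fun i => v (i - j) := by
  ext i
  simp

end Matrix

namespace CirculantOdd

variable {k : ℕ}

def lowPos (i : Fin k) : ZMod (2 * k + 1) := (i + 1 : ℕ)

def highPos (i : Fin k) : ZMod (2 * k + 1) := (k + 1 + i : ℕ)

theorem two_mul_add_one_eq_zero : 2 * (k : ZMod (2 * k + 1)) + 1 = 0 := by
  exact_mod_cast ZMod.natCast_self (2 * k + 1)

theorem lowPos_inj {i j : Fin k} : lowPos i = lowPos j ↔ i = j := by
  rw [lowPos, lowPos, ZMod.natCast_eq_natCast_iff_of_lt (by omega) (by omega), Fin.ext_iff]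
  omega

theorem highPos_inj {i j : Fin k} : highPos i = highPos j ↔ i = j := by
  rw [highPos, highPos, ZMod.natCast_eq_natCast_iff_of_lt (by omega) (by omega), Fin.ext_iff]
  omega

theorem lowPos_ne_zero (i : Fin k) : lowPos i ≠ 0 := by
  rw [lowPos, Ne, ZMod.natCast_eq_zero_iff_of_lt (by omega)]
  omega

theorem highPos_ne_zero (i : Fin k) : highPos i ≠ 0 := by
  rw [highPos, Ne, ZMod.natCast_eq_zero_iff_of_lt (by omega)]
  omega

theorem lowPos_ne_highPos (i j : Fin k) : lowPos i ≠ highPos j := by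
  rw [lowPos, highPos, Ne, ZMod.natCast_eq_natCast_iff_of_lt (by omega) (by omega)]
  omega

theorem highPos_ne_lowPos (i j : Fin k) : highPos i ≠ lowPos j :=
  (lowPos_ne_highPos j i).symm

theorem lowPos_ne_neg_lowPos (i j : Fin k) : lowPos i ≠ -lowPos j := by
  rw [Ne, eq_neg_iff_add_eq_zero, lowPos, lowPos, ← Nat.cast_add,
    ZMod.natCast_eq_zero_iff_of_lt (by omega)]
  omega

theorem highPos_ne_neg_highPos (i j : Fin k) : highPos i ≠ -highPos j := by
  have : highPos i + highPos j = ((i + j + 1 : ℕ) : ZMod (2 * k + 1)) := by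
    push_cast [highPos]; linear_combination (two_mul_add_one_eq_zero (k := k))
  rw [Ne, eq_neg_iff_add_eq_zero, this, ZMod.natCast_eq_zero_iff_of_lt (by omega)]
  omega

theorem highPos_sub_lowPos_eq_iff (i j : Fin k) : highPos i - lowPos j = k ↔ i = j := by
  rw [sub_eq_iff_eq_add', highPos, lowPos, ← Nat.cast_add,
    ZMod.natCast_eq_natCast_iff_of_lt (by omega) (by omega), Fin.ext_iff]
  omega

theorem highPos_sub_neg_lowPos_ne (i j : Fin k) : highPos i - -lowPos j ≠ k := by
  have : highPos i - -lowPos j - k = ((i + j + 2 : ℕ) : ZMod (2 * k + 1)) := by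
    push_cast [highPos, lowPos]; ring
  rw [Ne, ← sub_eq_zero, this, ZMod.natCast_eq_zero_iff_of_lt (by omega)]
  omega

theorem neg_highPos_sub_lowPos_ne (i j : Fin k) : -highPos i - lowPos j ≠ k := by
  have : -highPos i - lowPos j - k = -((i + j + 1 : ℕ) : ZMod (2 * k + 1)) := by
    push_cast [highPos, lowPos]
    linear_combination (-1 : ZMod (2 * k + 1)) * two_mul_add_one_eq_zero
  rw [Ne, ← sub_eq_zero, this, neg_eq_zero, ZMod.natCast_eq_zero_iff_of_lt (by omega)]
  omega

theorem neg_highPos_sub_neg_lowPos_eq_iff (i j : Fin k) :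
    -highPos i - -lowPos j = k ↔ (i : ℕ) = j + 1 := by
  have : -highPos i - -lowPos j - k = ((j + 1 : ℕ) : ZMod (2 * k + 1)) - (i : ℕ) := by
    push_cast [highPos, lowPos]
    linear_combination (-1 : ZMod (2 * k + 1)) * two_mul_add_one_eq_zero
  rw [← sub_eq_zero, this, sub_eq_zero, ZMod.natCast_eq_natCast_iff_of_lt (by omega) (by omega)]
  omega

variable {R : Type*} [CommRing R]

abbrev FlagIndex (k : ℕ) := Unit ⊕ (Fin k ⊕ Fin k)

def flagVec : FlagIndex k → ZMod (2 * k + 1) → R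
  | .inl _ => 1
  | .inr (.inl j) => Pi.single (lowPos j) 1 + Pi.single (-lowPos j) 1
  | .inr (.inr j) => Pi.single (highPos j) 1

def flagCoord : FlagIndex k → ZMod (2 * k + 1) → R
  | .inl _ => Pi.single 0 1
  | .inr (.inl i) => Pi.single (lowPos i) 1 - Pi.single 0 1
  | .inr (.inr i) => Pi.single (highPos i) 1 - Pi.single (-highPos i) 1

@[simp] theorem flagCoord_inl_dotProduct (w : ZMod (2 * k + 1) → R) (u : Unit) :
    flagCoord (.inl u) ⬝ᵥ w = w 0 := by
  simp [flagCoord]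

@[simp] theorem flagCoord_inr_inl_dotProduct (w : ZMod (2 * k + 1) → R) (i : Fin k) :
    flagCoord (.inr (.inl i)) ⬝ᵥ w = w (lowPos i) - w 0 := by
  simp [flagCoord, sub_dotProduct]

@[simp] theorem flagCoord_inr_inr_dotProduct (w : ZMod (2 * k + 1) → R) (i : Fin k) :
    flagCoord (.inr (.inr i)) ⬝ᵥ w = w (highPos i) - w (-highPos i) := by
  simp [flagCoord, sub_dotProduct]

variable (k R) in
def flagMatrix : Matrix (ZMod (2 * k + 1)) (FlagIndex k) R := of fun z y => flagVec y z

variable (k R) in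
def flagCoordMatrix : Matrix (FlagIndex k) (ZMod (2 * k + 1)) R := of flagCoord

theorem flagCoordMatrix_mul_flagMatrix : flagCoordMatrix k R * flagMatrix k R = 1 := by
  ext x y
  change flagCoord x ⬝ᵥ flagVec y = _
  rcases x with _ | i | i <;> rcases y with _ | j | j <;>
    simp only [flagCoord_inl_dotProduct, flagCoord_inr_inl_dotProduct,
      flagCoord_inr_inr_dotProduct] <;>
    simp [flagVec, Pi.single_apply, one_apply, neg_eq_iff_eq_neg, lowPos_inj, highPos_inj,
      lowPos_ne_zero, highPos_ne_zero, lowPos_ne_highPos, highPos_ne_lowPos, lowPos_ne_neg_lowPos,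
      highPos_ne_neg_highPos]

theorem flagMatrix_mul_flagCoordMatrix : flagMatrix k R * flagCoordMatrix k R = 1 :=
  (mul_eq_one_comm_of_equiv (Fintype.equivOfCardEq (by simp; omega))).mp
    flagCoordMatrix_mul_flagMatrix

def flagConj (M : Matrix (ZMod (2 * k + 1)) (ZMod (2 * k + 1)) R) :
    Matrix (FlagIndex k) (FlagIndex k) R :=
  flagCoordMatrix k R * M * flagMatrix k R

theorem flagConj_apply (M : Matrix (ZMod (2 * k + 1)) (ZMod (2 * k + 1)) R) (x y : FlagIndex k) :
    flagConj M x y = flagCoord x ⬝ᵥ (M *ᵥ flagVec y) := by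
  rw [flagConj, Matrix.mul_assoc]
  rfl

theorem det_flagConj (M : Matrix (ZMod (2 * k + 1)) (ZMod (2 * k + 1)) R) :
    (flagConj M).det = M.det :=
  det_mul_mul_of_mul_eq_one (Fintype.equivOfCardEq (by simp; omega))
    flagCoordMatrix_mul_flagMatrix M

theorem flagConj_mul (M N : Matrix (ZMod (2 * k + 1)) (ZMod (2 * k + 1)) R) :
    flagConj M * flagConj N = flagConj (M * N) := by
  simp only [flagConj, Matrix.mul_assoc]
  rw [← Matrix.mul_assoc (flagMatrix k R), flagMatrix_mul_flagCoordMatrix, Matrix.one_mul]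

theorem flagConj_circulant_inl_inl (v : ZMod (2 * k + 1) → R) :
    flagConj (circulant v) (.inl ()) (.inl ()) = ∑ i, v i := by
  simp [flagConj_apply, flagVec, circulant_mulVec_one]

theorem flagConj_circulant_inr_inl (v : ZMod (2 * k + 1) → R) (x : Fin k ⊕ Fin k) :
    flagConj (circulant v) (.inr x) (.inl ()) = 0 := by
  rcases x with i | i <;> simp [flagConj_apply, flagVec, circulant_mulVec_one]

theorem flagConj_circulant_inr_inr_inr_inl {v : ZMod (2 * k + 1) → R} (hv : ∀ i, v (-i) = v i)
    (i j : Fin k) : flagConj (circulant v) (.inr (.inr i)) (.inr (.inl j)) = 0 := by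
  simp only [flagConj_apply, flagVec, mulVec_add, circulant_mulVec_single_one,
    flagCoord_inr_inr_dotProduct, Pi.add_apply]
  rw [← hv (-highPos i - lowPos j), ← hv (-highPos i - -lowPos j)]
  ring_nf

theorem flagConj_circulant_single_inr_inr_inr_inl (i j : Fin k) :
    flagConj (circulant (Pi.single (k : ZMod (2 * k + 1)) (1 : R))) (.inr (.inr i)) (.inr (.inl j))
      = (if i = j then 1 else 0) - if (i : ℕ) = j + 1 then 1 else 0 := by
  simp only [flagConj_apply, flagVec, mulVec_add, circulant_mulVec_single_one, Pi.add_apply,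
    flagCoord_inr_inr_dotProduct, Pi.single_apply, highPos_sub_lowPos_eq_iff,
    highPos_sub_neg_lowPos_ne, neg_highPos_sub_lowPos_ne, neg_highPos_sub_neg_lowPos_eq_iff,
    if_false, add_zero, zero_add]

theorem det_flagConj_circulant_single_corner :
    ((flagConj (circulant (Pi.single (k : ZMod (2 * k + 1)) (1 : R)))).submatrix
      (.inr ∘ .inr) (.inr ∘ .inl)).det = 1 := by
  rw [det_of_isLowerTriangular]
  · simp [flagConj_circulant_single_inr_inr_inr_inl]
  · intro i j (hij : i < j)
    simp only [submatrix_apply, Function.comp_apply, flagConj_circulant_single_inr_inr_inr_inl]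
    rw [if_neg hij.ne, if_neg (by omega), sub_zero]

theorem det_circulant_eq_sum_mul_sq {a : ZMod (2 * k + 1) → R} (ha : ∀ i, a (-i) = a i) :
    (circulant a).det =
      (∑ i, a i) * ((flagConj (circulant a)).submatrix (.inr ∘ .inr) (.inr ∘ .inr)).det ^ 2 := by
  set D := flagConj (circulant a)
  set X := flagConj (circulant (Pi.single (k : ZMod (2 * k + 1)) (1 : R)))
  have hD₀ : D (.inl ()) (.inl ()) = ∑ i, a i := flagConj_circulant_inl_inl a
  have hD₁ : ∀ x, D (.inr x) (.inl ()) = 0 := flagConj_circulant_inr_inl a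
  have hD₂ : ∀ i j, D (.inr (.inr i)) (.inr (.inl j)) = 0 := flagConj_circulant_inr_inr_inr_inl ha
  have hDX : D * X = X * D := by rw [flagConj_mul, flagConj_mul, circulant_mul_comm]
  have hdet : (D.submatrix (.inr ∘ .inl) (.inr ∘ .inl)).det =
      (D.submatrix (.inr ∘ .inr) (.inr ∘ .inr)).det :=
    det_eq_of_mul_eq_mul_of_isUnit (by rw [det_flagConj_circulant_single_corner]; exact isUnit_one)
      (corner_mul_eq_mul_corner_of_commute hDX hD₁ hD₂
        fun i => flagConj_circulant_inr_inl _ (.inr i))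
  rw [← det_flagConj, det_of_unit_sum_sum_blockTriangular D hD₁ hD₂, hD₀, hdet, mul_assoc, sq]

end CirculantOdd

theorem circulant_det_odd {R : Type*} [CommRing R] (m : ℕ) [NeZero m] (hm : Odd m)
    (a : ZMod m → R) (hsym : ∀ i : ZMod m, a (-i) = a i) :
    ∃ v : R, (Matrix.circulant a).det = (∑ i ∈ Finset.range m, a i) * v ^ 2 := by
  obtain ⟨k, rfl⟩ := hm
  exact ⟨_, by rw [ZMod.sum_range_natCast, CirculantOdd.det_circulant_eq_sum_mul_sq hsym]⟩
end

section
/- Let p be an odd prime and a a nonzero element of F_p. The sign of the permutation of F_p given by x ↦ a*x equals the Legendre symbol (a|p), i.e., it is 1 if a is a quadratic residue mod p and -1 otherwise. (Lerch's theorem.) -/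
open Equiv Equiv.Perm

private lemma sign_toPerm_gen {p : ℕ} [Fact p.Prime] (hp : p ≠ 2) (g : (ZMod p)ˣ)
    (hg : ∀ x : (ZMod p)ˣ, x ∈ Subgroup.zpowers g) :
    Equiv.Perm.sign (MulAction.toPerm g : Equiv.Perm (ZMod p)) = -1 := by
  have hp' : p.Prime := Fact.out
  have hcard : Fintype.card (ZMod p) = p := ZMod.card p
  have hg1 : g ≠ 1 := by
    intro h
    have : Fintype.card (ZMod p)ˣ = p - 1 := ZMod.card_units_eq_totient p ▸ Nat.totient_prime hp'
    have h2 : ∀ x : (ZMod p)ˣ, x = 1 := by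
      intro x
      obtain ⟨k, hk⟩ := hg x
      simp [h, ← hk]
    have := Fintype.card_le_one_iff.mpr (fun a b => (h2 a).trans (h2 b).symm)
    have hp3 : 3 ≤ p := (Fact.out : p.Prime).two_le.lt_of_ne (Ne.symm hp)
    omega
  set σ : Equiv.Perm (ZMod p) := MulAction.toPerm g with hσ
  have hfix : ∀ x : ZMod p, σ x = x ↔ x = 0 := by
    intro x
    constructor
    · intro h
      have h' : (g : ZMod p) * x = x := h
      by_contra hx
      have : (g : ZMod p) = 1 :=
        mul_right_cancel₀ hx (by rw [h', one_mul])
      exact hg1 (Units.ext this)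
    · intro h; simp [h, hσ, Units.smul_def]
  have hcyc : σ.IsCycle := by
    refine ⟨1, ?_, ?_⟩
    · intro h
      exact one_ne_zero ((hfix 1).mp h)
    · intro y hy
      have hy0 : y ≠ 0 := fun h => hy ((hfix y).mpr h)
      obtain ⟨k, hk⟩ := hg (Units.mk0 y hy0)
      have hk' : g ^ k = Units.mk0 y hy0 := hk
      refine ⟨k, ?_⟩
      have : σ ^ k = MulAction.toPerm (g ^ k) := by
        rw [hσ]
        exact (map_zpow (MulAction.toPermHom (ZMod p)ˣ (ZMod p)) g k).symm
      rw [this, hk']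
      simp [Units.smul_def]
  have hsupp : σ.support = {(0 : ZMod p)}ᶜ := by
    ext x
    simp [Equiv.Perm.mem_support, hfix x]
  have hcardsupp : σ.support.card = p - 1 := by
    rw [hsupp, Finset.card_compl, Finset.card_singleton, Fintype.card_eq_nat_card,
      Nat.card_zmod]
  have heven : Even (p - 1) := by
    have := hp'.two_le
    rcases hp'.eq_two_or_odd' with h | h
    · exact absurd h hp
    · obtain ⟨m, hm⟩ := h
      exact ⟨m, by omega⟩
  rw [hcyc.sign, hcardsupp, heven.neg_one_pow]

theorem lerch_sign (p : ℕ) [Fact p.Prime] (hp : p ≠ 2) (a : ZMod p) (ha : a ≠ 0) :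
    ((Equiv.Perm.sign (Equiv.mulLeft₀ a ha)) : ℤ) = quadraticChar (ZMod p) a := by
  have hchar : ringChar (ZMod p) ≠ 2 := by
    rw [ZMod.ringChar_zmod_n]; exact hp
  obtain ⟨g, hg⟩ := IsCyclic.exists_generator (α := (ZMod p)ˣ)
  -- the two monoid homs
  set φ : (ZMod p)ˣ →* ℤˣ :=
    (Equiv.Perm.sign).comp (MulAction.toPermHom (ZMod p)ˣ (ZMod p)) with hφ
  set ψ : (ZMod p)ˣ →* ℤˣ := (quadraticChar (ZMod p)).toUnitHom with hψ
  -- g is not a square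
  have hgns : ¬ IsSquare (g : ZMod p) := by
    rintro ⟨c, hc⟩
    have hc0 : c ≠ 0 := by
      intro h; rw [h, mul_zero] at hc; exact g.ne_zero hc
    obtain ⟨b, hb⟩ := quadraticChar_exists_neg_one' hchar
    have hbns : ¬ IsSquare (b : ZMod p) := quadraticChar_neg_one_iff_not_isSquare.mp hb
    obtain ⟨k, hk⟩ := hg b
    apply hbns
    have hgu : g = Units.mk0 c hc0 * Units.mk0 c hc0 := Units.ext (by simpa using hc)
    refine ⟨((Units.mk0 c hc0) ^ k : (ZMod p)ˣ), ?_⟩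
    rw [← hk, hgu]
    push_cast [mul_zpow]
    ring
  have hqg : quadraticChar (ZMod p) (g : ZMod p) = -1 :=
    quadraticChar_neg_one_iff_not_isSquare.mpr hgns
  have hkey : φ g = ψ g := by
    have h1 : φ g = -1 := sign_toPerm_gen hp g hg
    have h2 : (ψ g : ℤ) = -1 := by
      rw [hψ, MulChar.coe_toUnitHom, hqg]
    rw [h1]
    exact (Units.ext h2).symm
  have hall : ∀ v : (ZMod p)ˣ, φ v = ψ v := by
    intro v
    obtain ⟨k, hk⟩ := hg v
    rw [← hk, map_zpow, map_zpow, hkey]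
  have hmla : Equiv.mulLeft₀ a ha = MulAction.toPerm (Units.mk0 a ha) := by
    ext x; simp [Units.smul_def]
  have := hall (Units.mk0 a ha)
  have hcoe : ((φ (Units.mk0 a ha) : ℤˣ) : ℤ) = ((ψ (Units.mk0 a ha) : ℤˣ) : ℤ) := by
    rw [this]
  rw [hmla]
  calc ((Equiv.Perm.sign (MulAction.toPerm (Units.mk0 a ha)) : ℤˣ) : ℤ)
      = ((φ (Units.mk0 a ha) : ℤˣ) : ℤ) := rfl
    _ = ((ψ (Units.mk0 a ha) : ℤˣ) : ℤ) := hcoe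
    _ = quadraticChar (ZMod p) a := by rw [hψ, MulChar.coe_toUnitHom]; rfl
end

section
/- Let p be an odd prime and c, d ∈ F_p with d a quadratic nonresidue (χ(d) = -1). Then det D_p(c,d) = 0 in F_p, where D_p(c,d) is the (p-1)×(p-1) matrix over F_p with (i,j)-entry (i^2 + c i j + d j^2)^{p-2} for 1 ≤ i,j ≤ p-1. -/
open Finset

private lemma pow_sub_two_eq_inv {p : ℕ} [Fact p.Prime] {m : ZMod p} (hm : m ≠ 0) :
    m ^ (p - 2) = m⁻¹ := by
  have hp2 : 2 ≤ p := (Fact.out (p := p.Prime)).two_le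
  have h1 : m ^ (p - 1) = 1 := ZMod.pow_card_sub_one_eq_one hm
  have : p - 1 = (p - 2) + 1 := by omega
  rw [this, pow_succ] at h1
  field_simp [hm] at h1 ⊢
  linear_combination h1

private lemma key_sum {p : ℕ} [Fact p.Prime] (hp : p ≠ 2) (c d : ZMod p)
    (hd : quadraticChar (ZMod p) d = -1) (a : ZMod p) (ha : a ≠ 0) :
    ∑ x : (ZMod p)ˣ, ((quadraticChar (ZMod p) (x : ZMod p) : ZMod p) * (x : ZMod p) *
      (a ^ 2 + c * a * (x : ZMod p) + d * (x : ZMod p) ^ 2) ^ (p - 2)) = 0 := by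
  have hd0 : d ≠ 0 := by
    intro h; rw [h] at hd; simp at hd
  set f : (ZMod p)ˣ → ZMod p := fun x =>
    (quadraticChar (ZMod p) (x : ZMod p) : ZMod p) * (x : ZMod p) *
      (a ^ 2 + c * a * (x : ZMod p) + d * (x : ZMod p) ^ 2) ^ (p - 2) with hf
  have hu0 : a ^ 2 * d⁻¹ ≠ 0 := by
    simp [pow_eq_zero_iff, ha, hd0]
  let u : (ZMod p)ˣ := Units.mk0 (a ^ 2 * d⁻¹) hu0
  let e : Equiv.Perm (ZMod p)ˣ := (Equiv.inv (ZMod p)ˣ).trans (Equiv.mulLeft u)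
  have hterm : ∀ x : (ZMod p)ˣ, f (e x) = - f x := by
    intro x
    set y : ZMod p := (x : ZMod p) with hy
    have hy0 : y ≠ 0 := x.ne_zero
    have hev : ((e x : (ZMod p)ˣ) : ZMod p) = a ^ 2 * d⁻¹ * y⁻¹ := by
      show ((u * x⁻¹ : (ZMod p)ˣ) : ZMod p) = _
      rw [Units.val_mul, Units.val_inv_eq_inv_val]
      rfl
    -- character value
    have hchi : quadraticChar (ZMod p) (a ^ 2 * d⁻¹ * y⁻¹) = - quadraticChar (ZMod p) y := by
      have h1 : quadraticChar (ZMod p) (a ^ 2 * d⁻¹ * y⁻¹) * quadraticChar (ZMod p) y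
          = quadraticChar (ZMod p) (a ^ 2 * d⁻¹) := by
        rw [← map_mul]
        congr 1
        field_simp
      have h2 : quadraticChar (ZMod p) (a ^ 2 * d⁻¹) = -1 := by
        rw [map_mul, quadraticChar_sq_one' ha, one_mul]
        have h3 : quadraticChar (ZMod p) d⁻¹ * quadraticChar (ZMod p) d = 1 := by
          rw [← map_mul, inv_mul_cancel₀ hd0, map_one]
        rw [hd] at h3; linarith
      rcases quadraticChar_dichotomy hy0 with h | h <;> rw [h] at h1 ⊢ <;>
        rw [h2] at h1 <;> linarith
    -- main algebraic identity
    have hQ : a ^ 2 + c * a * (a ^ 2 * d⁻¹ * y⁻¹) + d * (a ^ 2 * d⁻¹ * y⁻¹) ^ 2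
        = (a ^ 2 * d⁻¹ * (y⁻¹) ^ 2) * (a ^ 2 + c * a * y + d * y ^ 2) := by
      field_simp
      ring
    have hm0 : a ^ 2 * d⁻¹ * (y⁻¹) ^ 2 ≠ 0 := by
      simp [pow_eq_zero_iff, ha, hd0, hy0]
    have hpow : (a ^ 2 + c * a * (a ^ 2 * d⁻¹ * y⁻¹) + d * (a ^ 2 * d⁻¹ * y⁻¹) ^ 2) ^ (p - 2)
        = (a ^ 2 * d⁻¹ * (y⁻¹) ^ 2)⁻¹ * (a ^ 2 + c * a * y + d * y ^ 2) ^ (p - 2) := by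
      rw [hQ, mul_pow, pow_sub_two_eq_inv hm0]
    simp only [hf, hev, hchi, hpow]
    push_cast
    field_simp
    ring
  have hS : (∑ x : (ZMod p)ˣ, f x) = - ∑ x : (ZMod p)ˣ, f x := by
    conv_lhs => rw [← Equiv.sum_comp e f]
    rw [Finset.sum_congr rfl (fun x _ => hterm x), Finset.sum_neg_distrib]
  have h2 : (2 : ZMod p) * ∑ x : (ZMod p)ˣ, f x = 0 := by linear_combination hS
  have h2ne : (2 : ZMod p) ≠ 0 := by
    intro h
    have := (ZMod.natCast_eq_zero_iff 2 p).mp (by exact_mod_cast h)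
    have := (Nat.prime_dvd_prime_iff_eq (Fact.out) Nat.prime_two).mp this
    exact hp this
  exact (mul_eq_zero.mp h2).resolve_left h2ne

theorem det_Dp_nonresidue (p : ℕ) [Fact p.Prime] (hp : p ≠ 2) (c d : ZMod p)
    (hd : quadraticChar (ZMod p) d = -1) :
    (Matrix.of fun i j : Fin (p - 1) =>
        (((i : ℕ) + 1 : ZMod p) ^ 2 + c * ((i : ℕ) + 1) * ((j : ℕ) + 1) +
          d * ((j : ℕ) + 1 : ZMod p) ^ 2) ^ (p - 2)).det = 0 := by
  have hpp : p.Prime := Fact.out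
  have hp3 : 3 ≤ p := by
    rcases hpp.two_le.lt_or_eq with h | h
    · omega
    · exact absurd h.symm hp
  -- the index-to-units bijection
  have hne : ∀ j : Fin (p - 1), ((j : ℕ) + 1 : ZMod p) ≠ 0 := by
    intro j h
    have : (((j : ℕ) + 1 : ℕ) : ZMod p) = 0 := by push_cast; exact h
    have := (ZMod.natCast_eq_zero_iff _ p).mp this
    have hlt : (j : ℕ) + 1 < p := by omega
    have := Nat.le_of_dvd (by omega) this
    omega
  set ee : Fin (p - 1) → (ZMod p)ˣ := fun j => Units.mk0 _ (hne j) with hee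
  have heinj : Function.Injective ee := by
    intro j k h
    have h2 : ((j : ℕ) + 1 : ZMod p) = ((k : ℕ) + 1 : ZMod p) := congrArg Units.val h
    have h3 : (((j : ℕ) + 1 : ℕ) : ZMod p) = (((k : ℕ) + 1 : ℕ) : ZMod p) := by
      push_cast; exact h2
    have hj : (j : ℕ) + 1 < p := by omega
    have hk : (k : ℕ) + 1 < p := by omega
    have := congrArg ZMod.val h3
    rw [ZMod.val_cast_of_lt hj, ZMod.val_cast_of_lt hk] at this
    exact Fin.ext (by omega)
  have hebij : Function.Bijective ee := by
    rw [Fintype.bijective_iff_injective_and_card]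
    refine ⟨heinj, ?_⟩
    rw [Fintype.card_fin, ZMod.card_units_eq_totient, Nat.totient_prime hpp]
  -- kernel vector
  set v : Fin (p - 1) → ZMod p := fun j =>
    (quadraticChar (ZMod p) ((j : ℕ) + 1 : ZMod p) : ZMod p) * ((j : ℕ) + 1 : ZMod p) with hv
  rw [← Matrix.exists_mulVec_eq_zero_iff]
  refine ⟨v, ?_, ?_⟩
  · intro h
    have h0 : v ⟨0, by omega⟩ = 0 := congrFun h _
    simp [hv] at h0
  · funext i
    have ha : ((i : ℕ) + 1 : ZMod p) ≠ 0 := hne i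
    show Matrix.mulVec _ v i = 0
    simp only [Matrix.mulVec, dotProduct]
    calc ∑ j : Fin (p - 1), (Matrix.of fun i j : Fin (p - 1) =>
            (((i : ℕ) + 1 : ZMod p) ^ 2 + c * ((i : ℕ) + 1) * ((j : ℕ) + 1) +
              d * ((j : ℕ) + 1 : ZMod p) ^ 2) ^ (p - 2)) i j * v j
        = ∑ x : (ZMod p)ˣ,
            ((quadraticChar (ZMod p) (x : ZMod p) : ZMod p) * (x : ZMod p) *
              (((i : ℕ) + 1 : ZMod p) ^ 2 + c * ((i : ℕ) + 1 : ZMod p) * (x : ZMod p) +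
                d * (x : ZMod p) ^ 2) ^ (p - 2)) := by
          refine Fintype.sum_bijective ee hebij _ _ fun j => ?_
          simp only [hee, Units.val_mk0, Matrix.of_apply, hv]
          ring
      _ = 0 := key_sum hp c d hd _ ha
end

section
/- Let p be an odd prime and c ∈ F_p with c ≠ ±2 and c^2 - 4 a nonzero square in F_p. Then there exists x ∈ F_p such that det D_p(c) = (-1)^{(p-1)/2} * χ(c+2) * x^2, where D_p(c) is the (p-1)×(p-1) matrix over F_p with (i,j)-entry (i^2 + c i j + j^2)^{p-2}, and χ is the quadratic character of F_p. -/
open Finset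

lemma prod_sq_of_invol {β : Type*} [CommMonoid β] (σ : ℕ → ℕ) (f : ℕ → β) :
    ∀ (s : Finset ℕ), (∀ a ∈ s, σ a ∈ s) → (∀ a ∈ s, σ (σ a) = a) →
    (∀ a ∈ s, σ a ≠ a) → (∀ a ∈ s, f (σ a) = f a) → ∃ R, ∏ a ∈ s, f a = R ^ 2 := by
  intro s
  induction s using Finset.strongInduction with
  | _ s ih =>
    intro h1 h2 h3 h4
    rcases s.eq_empty_or_nonempty with rfl | ⟨a, ha⟩
    · exact ⟨1, by simp⟩
    have hσa : σ a ∈ s.erase a := Finset.mem_erase.2 ⟨h3 a ha, h1 a ha⟩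
    set s' := (s.erase a).erase (σ a) with hs'
    have hsub : s' ⊂ s := by
      refine Finset.ssubset_of_subset_of_ssubset ?_ (Finset.erase_ssubset ha)
      exact Finset.erase_subset _ _
    have hmem : ∀ b ∈ s', b ∈ s := fun b hb =>
      Finset.mem_of_mem_erase (Finset.mem_of_mem_erase hb)
    have h1' : ∀ b ∈ s', σ b ∈ s' := by
      intro b hb
      have hbs := hmem b hb
      refine Finset.mem_erase.2 ⟨?_, Finset.mem_erase.2 ⟨?_, h1 b hbs⟩⟩
      · intro h
        have hba : b = a := by rw [← h2 b hbs, h, h2 a ha]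
        exact (Finset.mem_erase.1 (Finset.mem_of_mem_erase hb)).1 hba
      · intro h
        have hba : b = σ a := by rw [← h2 b hbs, h]
        exact (Finset.mem_erase.1 hb).1 hba
    obtain ⟨R, hR⟩ := ih s' hsub (fun b hb => h1' b hb)
      (fun b hb => h2 b (hmem b hb)) (fun b hb => h3 b (hmem b hb))
      (fun b hb => h4 b (hmem b hb))
    refine ⟨f a * R, ?_⟩
    rw [← Finset.mul_prod_erase s f ha, ← Finset.mul_prod_erase _ f hσa, ← hs', hR,
      h4 a ha]
    rw [mul_pow, sq, sq, mul_assoc]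

lemma zmod_pow_card_sub_two {p : ℕ} [Fact p.Prime] (hp : p ≠ 2) (x : ZMod p) :
    x ^ (p - 2) = x⁻¹ := by
  have hp3 : 3 ≤ p := by
    have := (Fact.out : p.Prime).two_le
    rcases Nat.lt_or_ge p 3 with h | h
    · interval_cases p <;> simp_all
    · exact h
  rcases eq_or_ne x 0 with rfl | hx
  · rw [inv_zero, zero_pow]; omega
  · have h1 : x ^ (p - 2) * x = 1 := by
      rw [← pow_succ]
      have : p - 2 + 1 = p - 1 := by omega
      rw [this, ZMod.pow_card_sub_one_eq_one hx]
    field_simp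
    linear_combination h1

lemma sum_zmod_eq_zero {p : ℕ} [Fact p.Prime] (hp : p ≠ 2) : ∑ x : ZMod p, x = 0 := by
  have h : ∑ x : ZMod p, x = ∑ x : ZMod p, -x :=
    Fintype.sum_equiv (Equiv.neg _) _ _ (fun x => by simp)
  have h2 : (2 : ZMod p) * ∑ x : ZMod p, x = 0 := by
    rw [two_mul]; nth_rewrite 2 [h]; rw [← Finset.sum_add_distrib]; simp
  have h2ne : (2 : ZMod p) ≠ 0 := by
    intro hh
    have := (ZMod.natCast_eq_zero_iff 2 p).1 (by exact_mod_cast hh)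
    exact hp ((Nat.prime_dvd_prime_iff_eq (Fact.out : p.Prime) Nat.prime_two).1 this)
  exact (mul_eq_zero.1 h2).resolve_left h2ne

lemma sum_zmod_inv_eq_zero {p : ℕ} [Fact p.Prime] (hp : p ≠ 2) :
    ∑ x : ZMod p, x⁻¹ = 0 := by
  have h := Finset.sum_bijective (Inv.inv : ZMod p → ZMod p) inv_involutive.bijective
    (s := Finset.univ) (t := Finset.univ) (fun i => by simp) (g := fun x => x⁻¹)
    (f := fun x => x) (fun x _ => (inv_inv x).symm)
  rw [← h]
  exact sum_zmod_eq_zero hp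

lemma sum_units_coe {p : ℕ} [Fact p.Prime] {β : Type*} [AddCommMonoid β] (F : ZMod p → β) :
    ∑ t : (ZMod p)ˣ, F t = ∑ x ∈ (univ : Finset (ZMod p)).erase 0, F x := by
  refine Finset.sum_bij' (fun t _ => (t : ZMod p))
    (fun x hx => Units.mk0 x (Finset.ne_of_mem_erase hx)) ?_ ?_ ?_ ?_ ?_
  · intro t _
    exact Finset.mem_erase.2 ⟨t.ne_zero, Finset.mem_univ _⟩
  · intro x hx; exact Finset.mem_univ _
  · intro t _; exact Units.ext rfl
  · intro x hx; rfl
  · intro t _; rfl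

lemma Seval {p : ℕ} [Fact p.Prime] (hp : p ≠ 2) (c r s : ZMod p)
    (hrs : r * s = 1) (hsum : r + s = -c) (hd : r - s ≠ 0)
    (k : ℕ) (hk1 : 1 ≤ k) (hk2 : k ≤ p - 2) :
    ∑ t : (ZMod p)ˣ, (t : ZMod p) ^ k * ((t : ZMod p) ^ 2 + c * t + 1)⁻¹ =
      (r - s)⁻¹ * ((k : ZMod p) * (s ^ (k - 1) - r ^ (k - 1)) +
        (r ^ k + s ^ k) * (r - s)⁻¹) := by
  classical
  have hp3 : 3 ≤ p := by
    have := (Fact.out : p.Prime).two_le; rcases Nat.lt_or_ge p 3 with h | h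
    · interval_cases p <;> simp_all
    · exact h
  have hr0 : r ≠ 0 := fun h => by simp [h] at hrs
  have hs0 : s ≠ 0 := fun h => by simp [h] at hrs
  have hd' : s - r ≠ 0 := fun h => hd (by linear_combination -h)
  have hfac : ∀ t : ZMod p, t ^ 2 + c * t + 1 = (t - r) * (t - s) := by
    intro t; linear_combination t * hsum - hrs
  set r' : (ZMod p)ˣ := Units.mk0 r hr0 with hr'
  set s' : (ZMod p)ˣ := Units.mk0 s hs0 with hs'
  have hrs' : s' ∈ (univ : Finset (ZMod p)ˣ).erase r' := by
    refine mem_erase.2 ⟨?_, mem_univ _⟩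
    intro h
    exact hd' (by rw [show s = (s' : ZMod p) from rfl, h]; simp [hr'])
  set T : Finset (ZMod p)ˣ := ((univ : Finset (ZMod p)ˣ).erase r').erase s' with hT
  set F : (ZMod p)ˣ → ZMod p :=
    fun t => (t : ZMod p) ^ k * (((t : ZMod p) - r)⁻¹ * ((t : ZMod p) - s)⁻¹) with hF
  have step0 : ∑ t : (ZMod p)ˣ, (t : ZMod p) ^ k * ((t : ZMod p) ^ 2 + c * t + 1)⁻¹
      = ∑ t : (ZMod p)ˣ, F t := by
    refine Finset.sum_congr rfl fun t _ => ?_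
    rw [hfac, mul_inv]
  have step1 : ∑ t : (ZMod p)ˣ, F t = ∑ t ∈ T, F t := by
    rw [hT]
    rw [Finset.sum_erase _ (by simp [hF, hs'])]
    rw [Finset.sum_erase _ (by simp [hF, hr'])]
  -- pointwise identity on T
  set Q1 : (ZMod p)ˣ → ZMod p := fun t => ∑ j ∈ range k, (t : ZMod p) ^ j * r ^ (k - 1 - j)
    with hQ1
  set Q2 : (ZMod p)ˣ → ZMod p := fun t => ∑ j ∈ range k, (t : ZMod p) ^ j * s ^ (k - 1 - j)
    with hQ2
  have hmemT : ∀ t ∈ T, (t : ZMod p) ≠ r ∧ (t : ZMod p) ≠ s := by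
    intro t ht
    constructor
    · intro h
      exact (mem_erase.1 (mem_of_mem_erase ht)).1 (Units.ext (by simpa [hr'] using h))
    · intro h
      exact (mem_erase.1 ht).1 (Units.ext (by simpa [hs'] using h))
  have step2 : ∑ t ∈ T, F t = (r - s)⁻¹ *
      ((∑ t ∈ T, Q1 t + r ^ k * ∑ t ∈ T, ((t : ZMod p) - r)⁻¹) -
       (∑ t ∈ T, Q2 t + s ^ k * ∑ t ∈ T, ((t : ZMod p) - s)⁻¹)) := by
    rw [Finset.mul_sum, Finset.mul_sum, ← Finset.sum_add_distrib, ← Finset.sum_add_distrib,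
      ← Finset.sum_sub_distrib, Finset.mul_sum]
    refine Finset.sum_congr rfl fun t ht => ?_
    obtain ⟨htr, hts⟩ := hmemT t ht
    have htr' : (t : ZMod p) - r ≠ 0 := sub_ne_zero.2 htr
    have hts' : (t : ZMod p) - s ≠ 0 := sub_ne_zero.2 hts
    have h1 : Q1 t * ((t : ZMod p) - r) = (t : ZMod p) ^ k - r ^ k := geom_sum₂_mul _ _ _
    have h2 : Q2 t * ((t : ZMod p) - s) = (t : ZMod p) ^ k - s ^ k := geom_sum₂_mul _ _ _
    have hQ1t : Q1 t = ((t : ZMod p) ^ k - r ^ k) * ((t : ZMod p) - r)⁻¹ := by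
      field_simp
      linear_combination h1
    have hQ2t : Q2 t = ((t : ZMod p) ^ k - s ^ k) * ((t : ZMod p) - s)⁻¹ := by
      field_simp
      linear_combination h2
    rw [hF, hQ1t, hQ2t]
    field_simp
    ring
  -- generic sub-sum evaluations
  have hcard : Fintype.card (ZMod p) = p := ZMod.card p
  have sum_pow : ∀ j, j < k → ∑ t : (ZMod p)ˣ, (t : ZMod p) ^ j =
      if j = 0 then -1 else 0 := by
    intro j hj
    have h := FiniteField.sum_pow_units (ZMod p) j
    rw [hcard] at h
    rcases eq_or_ne j 0 with rfl | hj0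
    · rw [h, if_pos (dvd_zero _), if_pos rfl]
    · have : ¬ (p - 1 ∣ j) := fun hdv => by
        have := Nat.le_of_dvd (Nat.pos_of_ne_zero hj0) hdv; omega
      rw [h, if_neg this, if_neg hj0]
  have sumQuniv : ∀ x : ZMod p,
      ∑ t : (ZMod p)ˣ, (∑ j ∈ range k, (t : ZMod p) ^ j * x ^ (k - 1 - j))
        = - x ^ (k - 1) := by
    intro x
    rw [Finset.sum_comm]
    rw [Finset.sum_congr rfl (fun j hj => by
      rw [← Finset.sum_mul, sum_pow j (mem_range.1 hj)])]
    rw [Finset.sum_eq_single_of_mem 0 (mem_range.2 hk1) (fun j _ hj0 => by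
      rw [if_neg hj0, zero_mul])]
    rw [if_pos rfl, Nat.sub_zero, neg_one_mul]
  have sumT_split : ∀ G : (ZMod p)ˣ → ZMod p,
      ∑ t ∈ T, G t = (∑ t : (ZMod p)ˣ, G t) - G r' - G s' := by
    intro G
    have h1 := Finset.add_sum_erase univ G (mem_univ r')
    have h2 := Finset.add_sum_erase _ G hrs'
    rw [hT]
    linear_combination h1 + h2
  have sumInvUnits : ∀ a : ZMod p, a ≠ 0 →
      ∑ t : (ZMod p)ˣ, ((t : ZMod p) - a)⁻¹ = a⁻¹ := by
    intro a ha
    rw [sum_units_coe (fun x => (x - a)⁻¹)]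
    have htot : ∑ x : ZMod p, (x - a)⁻¹ = 0 := by
      rw [Finset.sum_bijective (fun x : ZMod p => x - a) (Equiv.subRight a).bijective
        (s := univ) (t := univ) (fun i => by simp) (g := fun y => y⁻¹)
        (f := fun x => (x - a)⁻¹) (fun x _ => rfl)]
      exact sum_zmod_inv_eq_zero hp
    have h0 := Finset.add_sum_erase univ (fun x : ZMod p => (x - a)⁻¹) (mem_univ 0)
    simp only [zero_sub, inv_neg] at h0
    rw [htot] at h0
    linear_combination h0
  set Qrs : ZMod p := ∑ j ∈ range k, s ^ j * r ^ (k - 1 - j) with hQrs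
  set Qsr : ZMod p := ∑ j ∈ range k, r ^ j * s ^ (k - 1 - j) with hQsr
  have hQQ : Qsr = Qrs := by
    have g1 : Qrs * (s - r) = s ^ k - r ^ k := geom_sum₂_mul s r k
    have g2 : Qsr * (r - s) = r ^ k - s ^ k := geom_sum₂_mul r s k
    refine mul_right_cancel₀ hd ?_
    linear_combination g2 + g1
  have hQ1r : Q1 r' = (k : ZMod p) * r ^ (k - 1) := by
    show (∑ j ∈ range k, ((r' : ZMod p)) ^ j * r ^ (k - 1 - j)) = _
    have : ∀ j ∈ range k, ((r' : ZMod p)) ^ j * r ^ (k - 1 - j) = r ^ (k - 1) := by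
      intro j hj
      have : (r' : ZMod p) = r := rfl
      rw [this, ← pow_add]
      congr 1
      have := mem_range.1 hj; omega
    rw [Finset.sum_congr rfl this, Finset.sum_const, card_range, nsmul_eq_mul]
  have hQ2s : Q2 s' = (k : ZMod p) * s ^ (k - 1) := by
    show (∑ j ∈ range k, ((s' : ZMod p)) ^ j * s ^ (k - 1 - j)) = _
    have : ∀ j ∈ range k, ((s' : ZMod p)) ^ j * s ^ (k - 1 - j) = s ^ (k - 1) := by
      intro j hj
      have : (s' : ZMod p) = s := rfl
      rw [this, ← pow_add]
      congr 1
      have := mem_range.1 hj; omega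
    rw [Finset.sum_congr rfl this, Finset.sum_const, card_range, nsmul_eq_mul]
  have hQ1s : Q1 s' = Qrs := rfl
  have hQ2r : Q2 r' = Qsr := rfl
  have sumQ1T : ∑ t ∈ T, Q1 t = - r ^ (k - 1) - (k : ZMod p) * r ^ (k - 1) - Qrs := by
    rw [sumT_split Q1, hQ1r, hQ1s]
    rw [show ∑ t : (ZMod p)ˣ, Q1 t = - r ^ (k-1) from sumQuniv r]
  have sumQ2T : ∑ t ∈ T, Q2 t = - s ^ (k - 1) - Qsr - (k : ZMod p) * s ^ (k - 1) := by
    rw [sumT_split Q2, hQ2s, hQ2r]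
    rw [show ∑ t : (ZMod p)ˣ, Q2 t = - s ^ (k-1) from sumQuniv s]
  have sumInvRT : ∑ t ∈ T, ((t : ZMod p) - r)⁻¹ = r⁻¹ - (s - r)⁻¹ := by
    have e1 : ((r' : ZMod p) - r)⁻¹ = 0 := by
      rw [show (r' : ZMod p) = r from rfl, sub_self, inv_zero]
    have e2 : ((s' : ZMod p) - r)⁻¹ = (s - r)⁻¹ := rfl
    rw [sumT_split (fun t => ((t : ZMod p) - r)⁻¹), sumInvUnits r hr0, e1, e2, sub_zero]
  have sumInvST : ∑ t ∈ T, ((t : ZMod p) - s)⁻¹ = s⁻¹ - (r - s)⁻¹ := by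
    have e1 : ((s' : ZMod p) - s)⁻¹ = 0 := by
      rw [show (s' : ZMod p) = s from rfl, sub_self, inv_zero]
    have e2 : ((r' : ZMod p) - s)⁻¹ = (r - s)⁻¹ := rfl
    rw [sumT_split (fun t => ((t : ZMod p) - s)⁻¹), sumInvUnits s hs0, e1, e2]
    ring
  rw [step0, step1, step2, sumQ1T, sumQ2T, sumInvRT, sumInvST, hQQ]
  obtain ⟨k', rfl⟩ : ∃ k', k = k' + 1 := ⟨k - 1, by omega⟩
  simp only [Nat.add_sub_cancel]
  push_cast
  field_simp
  ring


lemma det_eq_prod {p : ℕ} [Fact p.Prime] (hp : p ≠ 2) (c : ZMod p) :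
    ∃ W : ZMod p,
      (Matrix.of fun i j : Fin (p - 1) =>
          (((i : ℕ) + 1 : ZMod p) ^ 2 + c * ((i : ℕ) + 1) * ((j : ℕ) + 1) +
            ((j : ℕ) + 1 : ZMod p) ^ 2) ^ (p - 2)).det =
      (∏ a ∈ range (p - 1),
        ∑ t : (ZMod p)ˣ, (t : ZMod p) ^ a * ((t : ZMod p) ^ 2 + c * t + 1)⁻¹) * W ^ 2 := by
  classical
  have hprime : p.Prime := Fact.out
  have hp2 : 2 ≤ p := hprime.two_le
  set n := p - 1 with hn
  set A : Matrix (ZMod p)ˣ (ZMod p)ˣ (ZMod p) :=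
    Matrix.of fun u v => ((u : ZMod p) ^ 2 + c * u * v + (v : ZMod p) ^ 2)⁻¹ with hA
  -- the equivalence i ↦ i+1
  have hne1 : ∀ i : Fin n, ((i : ℕ) + 1 : ZMod p) ≠ 0 := by
    intro i
    have hi := i.isLt
    intro h
    rw [show (((i : ℕ) + 1 : ZMod p)) = (((i : ℕ) + 1 : ℕ) : ZMod p) by push_cast; ring] at h
    have := (ZMod.natCast_eq_zero_iff _ p).1 h
    have := Nat.le_of_dvd (Nat.succ_pos _) this
    omega
  set f1 : Fin n → (ZMod p)ˣ := fun i => Units.mk0 _ (hne1 i) with hf1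
  have hcardu : Fintype.card (ZMod p)ˣ = n := ZMod.card_units p
  have hinj1 : Function.Injective f1 := by
    intro i j hij
    have h1 : (((i : ℕ) + 1 : ZMod p)) = (((j : ℕ) + 1 : ZMod p)) := by
      have := congrArg (Units.val) hij; simpa [hf1] using this
    rw [show (((i : ℕ) + 1 : ZMod p)) = (((i : ℕ) + 1 : ℕ) : ZMod p) by push_cast; ring,
      show (((j : ℕ) + 1 : ZMod p)) = (((j : ℕ) + 1 : ℕ) : ZMod p) by push_cast; ring] at h1
    have hv := congrArg ZMod.val h1
    rw [ZMod.val_cast_of_lt (by omega : (i : ℕ) + 1 < p),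
      ZMod.val_cast_of_lt (by omega : (j : ℕ) + 1 < p)] at hv
    exact Fin.ext (by omega)
  set e1 : Fin n ≃ (ZMod p)ˣ := Equiv.ofBijective f1
    ((Fintype.bijective_iff_injective_and_card f1).2 ⟨hinj1, by simp [hcardu]⟩) with he1
  have hM : (Matrix.of fun i j : Fin (p - 1) =>
      (((i : ℕ) + 1 : ZMod p) ^ 2 + c * ((i : ℕ) + 1) * ((j : ℕ) + 1) +
        ((j : ℕ) + 1 : ZMod p) ^ 2) ^ (p - 2)) = A.submatrix e1 e1 := by
    ext i j
    have hei : ∀ i : Fin n, ((e1 i : (ZMod p)ˣ) : ZMod p) = ((i : ℕ) + 1 : ZMod p) := fun i => rfl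
    show (((i : ℕ) + 1 : ZMod p) ^ 2 + c * ((i : ℕ) + 1) * ((j : ℕ) + 1) +
        ((j : ℕ) + 1 : ZMod p) ^ 2) ^ (p - 2) =
      (((e1 i : (ZMod p)ˣ) : ZMod p) ^ 2 + c * ((e1 i : (ZMod p)ˣ) : ZMod p) *
        ((e1 j : (ZMod p)ˣ) : ZMod p) + ((e1 j : (ZMod p)ˣ) : ZMod p) ^ 2)⁻¹
    rw [hei, hei, zmod_pow_card_sub_two hp]
  -- generator
  obtain ⟨ζ, hζ⟩ := IsCyclic.exists_generator (α := (ZMod p)ˣ)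
  have hord : orderOf ζ = n := by
    rw [orderOf_eq_card_of_forall_mem_zpowers hζ, Nat.card_eq_fintype_card, hcardu]
  set z : ZMod p := (ζ : ZMod p) with hz
  have hzpow : ∀ j : ℕ, ((ζ ^ j : (ZMod p)ˣ) : ZMod p) = z ^ j := fun j => by
    rw [Units.val_pow_eq_pow_val]
  have hz0 : ∀ j : ℕ, z ^ j ≠ 0 := fun j => by
    rw [← hzpow]; exact Units.ne_zero _
  set f2 : Fin n → (ZMod p)ˣ := fun k => ζ ^ (k : ℕ) with hf2
  have hinj2 : Function.Injective f2 := by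
    intro i j hij
    have := pow_injOn_Iio_orderOf (x := ζ) (by rw [hord]; exact i.isLt)
      (by rw [hord]; exact j.isLt) hij
    exact Fin.ext this
  set e2 : Fin n ≃ (ZMod p)ˣ := Equiv.ofBijective f2
    ((Fintype.bijective_iff_injective_and_card f2).2 ⟨hinj2, by simp [hcardu]⟩) with he2
  set B : Matrix (Fin n) (Fin n) (ZMod p) := A.submatrix e2 e2 with hB
  set S : ℕ → ZMod p :=
    fun a => ∑ t : (ZMod p)ˣ, (t : ZMod p) ^ a * ((t : ZMod p) ^ 2 + c * t + 1)⁻¹ with hS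
  set V : Matrix (Fin n) (Fin n) (ZMod p) :=
    Matrix.vandermonde (fun a : Fin n => z ^ (a : ℕ)) with hV
  set D : Matrix (Fin n) (Fin n) (ZMod p) :=
    Matrix.diagonal (fun a : Fin n => S (a : ℕ)) with hD
  set E : Matrix (Fin n) (Fin n) (ZMod p) :=
    Matrix.diagonal (fun l : Fin n => (((ζ ^ (l : ℕ))⁻¹ : (ZMod p)ˣ) : ZMod p) ^ 2) with hE
  have key : V * B = D * (V * E) := by
    ext a l
    rw [Matrix.mul_apply, hD, hV, hE, Matrix.diagonal_mul, Matrix.mul_diagonal]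
    set L : ZMod p := z ^ (l : ℕ) with hL
    have hL0 : L ≠ 0 := hz0 _
    have hpt : ∀ k : Fin n,
        Matrix.vandermonde (fun a : Fin n => z ^ (a : ℕ)) a k * B k l =
        ((f2 k * (ζ ^ (l : ℕ))⁻¹ : (ZMod p)ˣ) : ZMod p) ^ (a : ℕ) *
          ((((f2 k * (ζ ^ (l : ℕ))⁻¹ : (ZMod p)ˣ) : ZMod p)) ^ 2 +
            c * ((f2 k * (ζ ^ (l : ℕ))⁻¹ : (ZMod p)ˣ) : ZMod p) + 1)⁻¹ *
          (L ^ (a : ℕ) * (L ^ 2)⁻¹) := by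
      intro k
      rw [Matrix.vandermonde_apply, hB, Matrix.submatrix_apply, hA, Matrix.of_apply]
      set P : ZMod p := z ^ (k : ℕ) with hP
      have hP0 : P ≠ 0 := hz0 _
      have hco : ((f2 k * (ζ ^ (l : ℕ))⁻¹ : (ZMod p)ˣ) : ZMod p) = P * L⁻¹ := by
        show ((ζ ^ (k : ℕ) * (ζ ^ (l : ℕ))⁻¹ : (ZMod p)ˣ) : ZMod p) = P * L⁻¹
        rw [Units.val_mul, Units.val_inv_eq_inv_val, hzpow, hzpow, ← hP, ← hL]
      have he2co : ((e2 k : (ZMod p)ˣ) : ZMod p) = P := by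
        rw [he2, Equiv.ofBijective_apply, hf2, hzpow]
      have he2co' : ((e2 l : (ZMod p)ˣ) : ZMod p) = L := by
        rw [he2, Equiv.ofBijective_apply, hf2, hzpow]
      rw [hco, he2co, he2co']
      have hfac2 : (P * L⁻¹) ^ 2 + c * (P * L⁻¹) + 1 =
          (P ^ 2 + c * P * L + L ^ 2) * ((L ^ 2)⁻¹) := by
        field_simp
      have hzak : (z ^ (a : ℕ)) ^ (k : ℕ) = P ^ (a : ℕ) := by
        rw [hP, ← pow_mul, ← pow_mul, Nat.mul_comm]
      rw [hfac2, mul_inv, inv_inv, hzak, mul_pow, inv_pow]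
      set Q : ZMod p := (P ^ 2 + c * P * L + L ^ 2)⁻¹ with hQdef
      field_simp
      try ring
    rw [Finset.sum_congr rfl (fun k _ => hpt k)]
    rw [← Finset.sum_mul]
    have hbij := Fintype.sum_bijective
      (fun k : Fin n => f2 k * (ζ ^ (l : ℕ))⁻¹)
      (Function.Bijective.comp (Group.mulRight_bijective _)
        ((Fintype.bijective_iff_injective_and_card f2).2 ⟨hinj2, by simp [hcardu]⟩))
      (fun k : Fin n => ((f2 k * (ζ ^ (l : ℕ))⁻¹ : (ZMod p)ˣ) : ZMod p) ^ (a : ℕ) *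
          ((((f2 k * (ζ ^ (l : ℕ))⁻¹ : (ZMod p)ˣ) : ZMod p)) ^ 2 +
            c * ((f2 k * (ζ ^ (l : ℕ))⁻¹ : (ZMod p)ˣ) : ZMod p) + 1)⁻¹)
      (fun t : (ZMod p)ˣ => (t : ZMod p) ^ (a : ℕ) *
          (((t : ZMod p)) ^ 2 + c * (t : ZMod p) + 1)⁻¹)
      (fun k => rfl)
    rw [hbij]
    have hva : Matrix.vandermonde (fun a : Fin n => z ^ (a : ℕ)) a l = L ^ (a : ℕ) := by
      rw [Matrix.vandermonde_apply, hL, ← pow_mul, ← pow_mul, Nat.mul_comm]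
    have hE2 : (((ζ ^ (l : ℕ))⁻¹ : (ZMod p)ˣ) : ZMod p) ^ 2 = (L ^ 2)⁻¹ := by
      rw [Units.val_inv_eq_inv_val, hzpow, ← hL, inv_pow]
    rw [hva, hE2]
  have hdetV : V.det ≠ 0 := by
    rw [hV]
    refine Matrix.det_vandermonde_ne_zero_iff.2 ?_
    intro a b hab
    refine Fin.ext (pow_injOn_Iio_orderOf (x := ζ) (by rw [hord]; exact a.isLt)
      (by rw [hord]; exact b.isLt) ?_)
    exact Units.ext (by rw [hzpow, hzpow]; exact hab)
  have hdet := congrArg Matrix.det key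
  rw [Matrix.det_mul, Matrix.det_mul, Matrix.det_mul] at hdet
  have hBdet : B.det = D.det * E.det := by
    have h1 : V.det * B.det = V.det * (D.det * E.det) := by
      rw [hdet]; ring
    exact mul_left_cancel₀ hdetV h1
  refine ⟨∏ l : Fin n, (((ζ ^ (l : ℕ))⁻¹ : (ZMod p)ˣ) : ZMod p), ?_⟩
  rw [hM, Matrix.det_submatrix_equiv_self, ← Matrix.det_submatrix_equiv_self e2 A, ← hB, hBdet]
  rw [hD, hE, Matrix.det_diagonal, Matrix.det_diagonal]
  rw [Fin.prod_univ_eq_prod_range (fun a => S a) n, ← Finset.prod_pow]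


lemma Ssym {p : ℕ} [Fact p.Prime] (c : ZMod p) (a b : ℕ)
    (hab : a + b = 2 ∨ a + b = (p - 1) + 2) :
    ∑ t : (ZMod p)ˣ, (t : ZMod p) ^ a * ((t : ZMod p) ^ 2 + c * t + 1)⁻¹ =
    ∑ t : (ZMod p)ˣ, (t : ZMod p) ^ b * ((t : ZMod p) ^ 2 + c * t + 1)⁻¹ := by
  refine Finset.sum_bijective (fun t : (ZMod p)ˣ => t⁻¹) inv_involutive.bijective
    (fun t => by simp) ?_
  intro t _
  set x : ZMod p := (t : ZMod p) with hxd
  have hx : x ≠ 0 := Units.ne_zero t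
  have hx1 : x ^ (p - 1) = 1 := ZMod.pow_card_sub_one_eq_one hx
  have hcoe : ((t⁻¹ : (ZMod p)ˣ) : ZMod p) = x⁻¹ := by
    rw [Units.val_inv_eq_inv_val]
  rw [hcoe]
  have hclaim1 : (x⁻¹ ^ 2 + c * x⁻¹ + 1)⁻¹ = x ^ 2 * (x ^ 2 + c * x + 1)⁻¹ := by
    have h : x⁻¹ ^ 2 + c * x⁻¹ + 1 = x⁻¹ ^ 2 * (x ^ 2 + c * x + 1) := by
      field_simp
      ring
    rw [h, mul_inv, inv_pow, inv_inv]
  rw [hclaim1]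
  have hab2 : x ^ (a + b) = x ^ 2 := by
    rcases hab with h | h
    · rw [h]
    · rw [h, pow_add, hx1, one_mul]
  have hkey : x⁻¹ ^ b * x ^ 2 = x ^ a := by
    refine mul_right_cancel₀ (pow_ne_zero b hx) ?_
    have hxb : x⁻¹ ^ b * x ^ b = 1 := by
      rw [← mul_pow, inv_mul_cancel₀ hx, one_pow]
    rw [← pow_add x a b, hab2]
    linear_combination x ^ 2 * hxb
  calc x ^ a * (x ^ 2 + c * x + 1)⁻¹
      = (x⁻¹ ^ b * x ^ 2) * (x ^ 2 + c * x + 1)⁻¹ := by rw [hkey]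
    _ = x⁻¹ ^ b * (x ^ 2 * (x ^ 2 + c * x + 1)⁻¹) := by ring


lemma p3_case : ∀ (c0 : ZMod 3), c0 ≠ 2 → c0 ≠ -2 → IsSquare (c0 ^ 2 - 4) →
    c0 ^ 2 - 4 ≠ 0 → False := by decide


theorem det_Dp_sq (p : ℕ) [Fact p.Prime] (hp : p ≠ 2) (c : ZMod p)
    (hc2 : c ≠ 2) (hc2' : c ≠ -2) (hsq : IsSquare (c ^ 2 - 4)) (hne : c ^ 2 - 4 ≠ 0) :
    ∃ x : ZMod p,
      (Matrix.of fun i j : Fin (p - 1) =>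
          (((i : ℕ) + 1 : ZMod p) ^ 2 + c * ((i : ℕ) + 1) * ((j : ℕ) + 1) +
            ((j : ℕ) + 1 : ZMod p) ^ 2) ^ (p - 2)).det =
        (-1 : ZMod p) ^ ((p - 1) / 2) * ((quadraticChar (ZMod p) (c + 2) : ℤ) : ZMod p) * x ^ 2 := by
  classical
  have hprime : p.Prime := Fact.out
  have hodd : p % 2 = 1 := Nat.odd_iff.1 (hprime.odd_of_ne_two hp)
  have hp5 : 5 ≤ p := by
    rcases Nat.lt_or_ge p 5 with h | h
    · exfalso
      have h2 := hprime.two_le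
      have h3 : p = 3 := by
        interval_cases p
        · exact absurd rfl hp
        · rfl
        · exact absurd hprime (by norm_num)
      subst h3
      exact p3_case c hc2 hc2' hsq hne
    · exact h
  obtain ⟨W, hW⟩ := det_eq_prod hp c
  set m : ℕ := (p - 1) / 2 with hm
  have hnm : p - 1 = 2 * m := by omega
  have hm2 : 2 ≤ m := by omega
  -- roots of X^2 + cX + 1
  obtain ⟨d, hd⟩ := hsq
  have hd0 : d ≠ 0 := by
    intro h
    exact hne (by rw [hd, h, mul_zero])
  have h20 : (2 : ZMod p) ≠ 0 := by
    have h2 : ((2 : ℕ) : ZMod p) ≠ 0 := by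
      rw [Ne, ZMod.natCast_eq_zero_iff]
      intro hdvd
      have := Nat.le_of_dvd (by norm_num) hdvd
      omega
    simpa using h2
  set r : ZMod p := (d - c) / 2 with hr
  set s : ZMod p := (-d - c) / 2 with hs
  have hrs : r * s = 1 := by
    rw [hr, hs]
    field_simp
    linear_combination hd
  have hsum : r + s = -c := by rw [hr, hs]; field_simp; ring
  have hds : r - s = d := by rw [hr, hs]; field_simp; ring
  have hdne : r - s ≠ 0 := by rw [hds]; exact hd0
  have hr0 : r ≠ 0 := fun h => by simp [h] at hrs
  have hs0 : s ≠ 0 := fun h => by simp [h] at hrs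
  set S : ℕ → ZMod p :=
    fun a => ∑ t : (ZMod p)ˣ, (t : ZMod p) ^ a * ((t : ZMod p) ^ 2 + c * t + 1)⁻¹ with hS
  -- the involution
  set σ : ℕ → ℕ := fun a => ((p - 1) + 2 - a) % (p - 1) with hσ
  have hσle : ∀ a, a < p - 1 → a ≤ 2 → σ a = 2 - a := by
    intro a ha h2
    rw [hσ]
    show ((p - 1) + 2 - a) % (p - 1) = 2 - a
    rw [show (p - 1) + 2 - a = (p - 1) + (2 - a) by omega, Nat.add_mod_left,
      Nat.mod_eq_of_lt (by omega)]
  have hσge : ∀ a, a < p - 1 → 3 ≤ a → σ a = (p - 1) + 2 - a := by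
    intro a ha h3
    rw [hσ]
    exact Nat.mod_eq_of_lt (by omega)
  have hσlt : ∀ a, a < p - 1 → σ a < p - 1 := by
    intro a ha
    rw [hσ]
    exact Nat.mod_lt _ (by omega)
  have hσinv : ∀ a, a < p - 1 → σ (σ a) = a := by
    intro a ha
    rcases le_or_gt a 2 with h2 | h3
    · rw [hσle a ha h2, hσle (2 - a) (by omega) (by omega)]
      omega
    · rw [hσge a ha (by omega), hσge ((p - 1) + 2 - a) (by omega) (by omega)]
      omega
  have hσsum : ∀ a, a < p - 1 → a + σ a = 2 ∨ a + σ a = (p - 1) + 2 := by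
    intro a ha
    rcases le_or_gt a 2 with h2 | h3
    · left; rw [hσle a ha h2]; omega
    · right; rw [hσge a ha (by omega)]; omega
  have hσ1 : σ 1 = 1 := by rw [hσle 1 (by omega) (by omega)]
  have hσ1m : σ (1 + m) = 1 + m := by rw [hσge (1 + m) (by omega) (by omega)]; omega
  -- split off the two fixed points
  have hsub : ({1, 1 + m} : Finset ℕ) ⊆ range (p - 1) := by
    intro a ha
    rcases Finset.mem_insert.1 ha with h | h
    · rw [h]; exact mem_range.2 (by omega)
    · rw [Finset.mem_singleton.1 h]; exact mem_range.2 (by omega)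
  set rest : Finset ℕ := range (p - 1) \ {1, 1 + m} with hrest
  have hmemrest : ∀ a ∈ rest, a < p - 1 ∧ a ≠ 1 ∧ a ≠ 1 + m := by
    intro a ha
    obtain ⟨h1, h2⟩ := Finset.mem_sdiff.1 ha
    refine ⟨mem_range.1 h1, ?_, ?_⟩
    · intro h; exact h2 (by rw [h]; exact Finset.mem_insert_self _ _)
    · intro h; exact h2 (by rw [h]; exact Finset.mem_insert.2 (Or.inr (Finset.mem_singleton_self _)))
  obtain ⟨R, hR⟩ := prod_sq_of_invol σ S rest
    (by
      intro a ha
      obtain ⟨h1, h2, h3⟩ := hmemrest a ha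
      refine Finset.mem_sdiff.2 ⟨mem_range.2 (hσlt a h1), ?_⟩
      intro hmem
      rcases Finset.mem_insert.1 hmem with h | h
      · exact h2 (by rw [← hσinv a h1, h, hσ1])
      · exact h3 (by rw [← hσinv a h1, Finset.mem_singleton.1 h, hσ1m]))
    (fun a ha => hσinv a (hmemrest a ha).1)
    (by
      intro a ha hfix
      obtain ⟨h1, h2, h3⟩ := hmemrest a ha
      rcases hσsum a h1 with h | h
      · rw [hfix] at h; exact h2 (by omega)
      · rw [hfix] at h; exact h3 (by omega))
    (by
      intro a ha
      obtain ⟨h1, _, _⟩ := hmemrest a ha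
      exact Ssym c (σ a) a (by rcases hσsum a h1 with h | h <;> [left; right] <;> omega))
  have hsplit : ∏ a ∈ range (p - 1), S a = (S 1 * S (1 + m)) * R ^ 2 := by
    rw [← Finset.prod_sdiff hsub, ← hrest, hR, Finset.prod_pair (by omega)]
    ring
  -- values of S 1 and S (1+m)
  have hS1 : S 1 = -c * ((r - s)⁻¹ * (r - s)⁻¹) := by
    rw [show S 1 = _ from Seval hp c r s hrs hsum hdne 1 le_rfl (by omega)]
    simp only [pow_zero, sub_self, mul_zero, zero_add, pow_one, Nat.cast_one]
    linear_combination ((r - s)⁻¹ * (r - s)⁻¹) * hsum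
  set ε : ZMod p := r ^ m with hε
  have hε0 : ε ≠ 0 := pow_ne_zero _ hr0
  have hεsq : ε * ε = 1 := by
    rw [hε, ← pow_add, show m + m = p - 1 by omega, ZMod.pow_card_sub_one_eq_one hr0]
  have hsm : s ^ m = ε := by
    have h1 : s ^ m * ε = 1 := by
      rw [hε, ← mul_pow, mul_comm s r, hrs, one_pow]
    refine mul_right_cancel₀ hε0 ?_
    rw [h1, hεsq]
  have hSm : S (1 + m) = ε * S 1 := by
    rw [show S (1 + m) = _ from Seval hp c r s hrs hsum hdne (1 + m) (by omega) (by omega),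
      hS1]
    rw [Nat.add_sub_cancel_left, hsm, ← hε]
    rw [pow_add, pow_add, pow_one, pow_one, ← hε, hsm]
    linear_combination ((r - s)⁻¹ * (r - s)⁻¹ * ε) * hsum
  -- Euler's criterion for the quadratic character
  have hcp2 : c + 2 ≠ 0 := fun h => hc2' (by linear_combination h)
  have hphalf : p / 2 = m := by omega
  have hchi : ((quadraticChar (ZMod p) (c + 2) : ℤ) : ZMod p) = (c + 2) ^ m := by
    by_cases hsq2 : IsSquare (c + 2)
    · rw [(quadraticChar_one_iff_isSquare hcp2).2 hsq2]
      have h1 := (ZMod.euler_criterion p hcp2).1 hsq2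
      rw [hphalf] at h1
      rw [h1]
      simp
    · have hq : quadraticChar (ZMod p) (c + 2) = -1 :=
        quadraticChar_neg_one_iff_not_isSquare.2 hsq2
      rw [hq]
      have hx2 : ((c + 2) ^ m) * ((c + 2) ^ m) = 1 := by
        rw [← pow_add, show m + m = p - 1 by omega, ZMod.pow_card_sub_one_eq_one hcp2]
      rcases mul_self_eq_one_iff.1 hx2 with h1 | h1
      · exact absurd ((ZMod.euler_criterion p hcp2).2 (by rw [hphalf]; exact h1)) hsq2
      · rw [h1]; push_cast; ring
  -- the key quadratic identity
  have hrroot : r ^ 2 + c * r + 1 = 0 := by linear_combination r * hsum - hrs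
  have hkeyq : -r * (c + 2) = (r - 1) ^ 2 := by linear_combination -hrroot
  set ρ : ZMod p := (r - 1) ^ m with hρ
  have hAe : ((-1 : ZMod p) ^ m * (c + 2) ^ m) * ε = ρ ^ 2 := by
    have h1 : ((-1 : ZMod p) ^ m * (c + 2) ^ m) * ε = (-r * (c + 2)) ^ m := by
      rw [hε, show (-r * (c + 2)) = (-1) * r * (c + 2) by ring, mul_pow, mul_pow]
      ring
    rw [h1, hkeyq, hρ, ← pow_mul, ← pow_mul, Nat.mul_comm]
  have hA2 : ((-1 : ZMod p) ^ m * (c + 2) ^ m) * ((-1 : ZMod p) ^ m * (c + 2) ^ m) = 1 := by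
    have h1 : ((-1 : ZMod p) ^ m * (c + 2) ^ m) = (-(c + 2)) ^ m := by
      rw [show (-(c + 2) : ZMod p) = (-1) * (c + 2) by ring, mul_pow]
    rw [h1, ← pow_add, show m + m = p - 1 by omega,
      ZMod.pow_card_sub_one_eq_one (neg_ne_zero.2 hcp2)]
  -- conclusion
  refine ⟨ρ * (c * ((r - s)⁻¹ * (r - s)⁻¹) * R * W), ?_⟩
  rw [hW, hchi, hsplit, hSm, hS1]
  linear_combination
    (((-1 : ZMod p) ^ m * (c + 2) ^ m) *
      (c ^ 2 * ((r - s)⁻¹ * (r - s)⁻¹ * ((r - s)⁻¹ * (r - s)⁻¹)) * R ^ 2 * W ^ 2)) * hAe -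
    ((c ^ 2 * ((r - s)⁻¹ * (r - s)⁻¹ * ((r - s)⁻¹ * (r - s)⁻¹)) * R ^ 2 * W ^ 2 * ε)) * hA2
end
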